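/- arXiv:math/9811068 — 6 statements merged into one kernel-verified Lean document; each statement's English description precedes it below -/
import Mathlib

section
/- Let f: ℝ → ℂ be a Schwartz function with f(0) = 0 and ∫_ℝ f(x) dx = 0. For x > 0 define E(f)(x) = x^{1/2} ∑_{n∈ℤ, n≠0} f(nx). Then: (i) the series converges absolutely for every x > 0; (ii) E(f)(x) = E(F f)(1/x) for every x > 0; (iii) for every n ∈ ℕ there is a constant c with |E(f)(x)| ≤ c · min(x, 1/x)^n for all x > 0. -/
open MeasureTheory

/-- `E(g)(x) = x^{1/2} ∑_{n∈ℤ, n≠0} g(nx)` for `x > 0`. -/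
noncomputable def Esum (g : ℝ → ℂ) (x : ℝ) : ℂ :=
  (Real.sqrt x : ℂ) * ∑' n : {n : ℤ // n ≠ 0}, g (((n : ℤ) : ℝ) * x)

open FourierTransform

private lemma term_bound (g : SchwartzMap ℝ ℂ) (k : ℕ) :
    ∃ C : ℝ, 0 ≤ C ∧ ∀ (x : ℝ), 0 < x → ∀ n : ℤ, n ≠ 0 →
      ‖g ((n : ℝ) * x)‖ ≤ C / x ^ k * |(n : ℝ)| ^ (-(k : ℝ)) := by
  obtain ⟨C, hC0, hC⟩ := g.decay k 0
  refine ⟨C, hC0.le, fun x hx n hn => ?_⟩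
  have hn1 : (1:ℝ) ≤ |(n:ℝ)| := by
    rw [← Int.cast_abs]; exact_mod_cast Int.one_le_abs hn
  have hnpos : (0:ℝ) < |(n:ℝ)| := lt_of_lt_of_le one_pos hn1
  have h := hC ((n:ℝ) * x)
  rw [norm_iteratedFDeriv_zero] at h
  have hnorm : ‖(n:ℝ) * x‖ = |(n:ℝ)| * x := by
    rw [Real.norm_eq_abs, abs_mul, abs_of_pos hx]
  rw [hnorm, mul_pow] at h
  rw [Real.rpow_neg hnpos.le, Real.rpow_natCast]
  have h2 : ‖g ((n:ℝ) * x)‖ ≤ C / (|(n:ℝ)| ^ k * x ^ k) := by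
    rw [le_div_iff₀ (by positivity)]
    rw [mul_comm]
    exact h
  calc ‖g ((n:ℝ) * x)‖ ≤ C / (|(n:ℝ)| ^ k * x ^ k) := h2
    _ = C / x ^ k * (|(n:ℝ)| ^ k)⁻¹ := by ring

private lemma summable_norm_int (g : SchwartzMap ℝ ℂ) {x : ℝ} (hx : 0 < x) :
    Summable fun n : ℤ => ‖g ((n : ℝ) * x)‖ := by
  obtain ⟨C, hC0, hC⟩ := term_bound g 2
  have hS : Summable fun n : ℤ => C / x ^ 2 * |(n:ℝ)| ^ (-((2:ℕ):ℝ)) :=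
    (Real.summable_abs_int_rpow (by norm_num)).mul_left _
  refine Summable.of_norm_bounded_eventually hS ?_
  rw [Filter.eventually_cofinite]
  apply Set.Finite.subset (Set.finite_singleton (0:ℤ))
  intro n hn
  simp only [Set.mem_setOf_eq, norm_norm] at hn
  simp only [Set.mem_singleton_iff]
  by_contra h0
  exact hn (hC x hx n h0)

private lemma fourier_comp_mul (f : ℝ → ℂ) {x : ℝ} (hx : 0 < x) (ξ : ℝ) :
    𝓕 (fun y => f (y * x)) ξ
      = (x : ℂ)⁻¹ * 𝓕 f (ξ / x) := by
  have hx0 : x ≠ 0 := hx.ne'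
  rw [Real.fourier_real_eq, Real.fourier_real_eq]
  have key : (fun v : ℝ => 𝐞 (-(v * ξ)) • f (v * x))
      = fun v : ℝ => (fun u : ℝ => 𝐞 (-(u * (ξ / x))) • f u) (v * x) := by
    ext v
    simp only
    rw [show v * x * (ξ / x) = v * ξ by field_simp]
  rw [key, MeasureTheory.Measure.integral_comp_mul_right
    (fun u : ℝ => 𝐞 (-(u * (ξ / x))) • f u) x]
  rw [abs_of_pos (inv_pos.mpr hx)]
  rw [Complex.real_smul, Complex.ofReal_inv]

private lemma poisson_scaled (f : SchwartzMap ℝ ℂ) {x : ℝ} (hx : 0 < x) :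
    ∑' n : ℤ, f ((n : ℝ) * x)
      = (x : ℂ)⁻¹ * ∑' n : ℤ, 𝓕 (⇑f) ((n : ℝ) * (1 / x)) := by
  have hx0 : x ≠ 0 := hx.ne'
  let e : ℝ ≃L[ℝ] ℝ := ContinuousLinearEquiv.unitsEquivAut ℝ (Units.mk0 x hx0)
  let g : SchwartzMap ℝ ℂ := SchwartzMap.compCLMOfContinuousLinearEquiv ℝ e f
  have hg : ∀ y : ℝ, g y = f (y * x) := fun y => rfl
  have hgc : ⇑g = fun y : ℝ => f (y * x) := funext hg
  have h := SchwartzMap.tsum_eq_tsum_fourier g 0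
  simp only [zero_add, QuotientAddGroup.mk_zero, fourier_eval_zero, mul_one,
    SchwartzMap.fourierTransformCLM_apply, SchwartzMap.fourier_coe] at h
  calc ∑' n : ℤ, f ((n : ℝ) * x) = ∑' n : ℤ, g ((n : ℤ) : ℝ) := by
        refine tsum_congr fun n => ?_
        rw [hg, mul_comm]
    _ = ∑' n : ℤ, 𝓕 (⇑g) ((n : ℤ) : ℝ) := h
    _ = ∑' n : ℤ, (x : ℂ)⁻¹ * 𝓕 (⇑f) ((n : ℝ) * (1 / x)) := by
        refine tsum_congr fun n => ?_
        rw [hgc, fourier_comp_mul (⇑f) hx, div_eq_mul_one_div]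
    _ = (x : ℂ)⁻¹ * ∑' n : ℤ, 𝓕 (⇑f) ((n : ℝ) * (1 / x)) :=
        tsum_mul_left

private lemma esum_decay (g : SchwartzMap ℝ ℂ) (n : ℕ) :
    ∃ c : ℝ, 0 ≤ c ∧ ∀ x : ℝ, 1 ≤ x → ‖Esum (⇑g) x‖ ≤ c * (1 / x) ^ n := by
  obtain ⟨C, hC0, hC⟩ := term_bound g (n + 2)
  set S : ℝ := ∑' m : {m : ℤ // m ≠ 0}, |((m : ℤ) : ℝ)| ^ (-((n + 2 : ℕ) : ℝ)) with hSdef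
  have hSsum : Summable fun m : {m : ℤ // m ≠ 0} => |((m : ℤ) : ℝ)| ^ (-((n + 2 : ℕ) : ℝ)) :=
    (Real.summable_abs_int_rpow (by push_cast; linarith [Nat.cast_nonneg (α := ℝ) n])).subtype _
  have hS0 : 0 ≤ S := tsum_nonneg fun m => Real.rpow_nonneg (abs_nonneg _) _
  refine ⟨C * S, by positivity, fun x hx => ?_⟩
  have hx0 : 0 < x := lt_of_lt_of_le one_pos hx
  have hsum : Summable fun m : {m : ℤ // m ≠ 0} => ‖g (((m : ℤ) : ℝ) * x)‖ :=
    (summable_norm_int g hx0).subtype _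
  have h1 : ‖∑' m : {m : ℤ // m ≠ 0}, g (((m : ℤ) : ℝ) * x)‖
      ≤ ∑' m : {m : ℤ // m ≠ 0}, ‖g (((m : ℤ) : ℝ) * x)‖ := norm_tsum_le_tsum_norm hsum
  have h2 : ∑' m : {m : ℤ // m ≠ 0}, ‖g (((m : ℤ) : ℝ) * x)‖
      ≤ ∑' m : {m : ℤ // m ≠ 0},
          C / x ^ (n + 2) * |((m : ℤ) : ℝ)| ^ (-((n + 2 : ℕ) : ℝ)) :=
    Summable.tsum_le_tsum (fun m => hC x hx0 m m.2) hsum (hSsum.mul_left _)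
  rw [tsum_mul_left, ← hSdef] at h2
  have hE : ‖Esum (⇑g) x‖
      = Real.sqrt x * ‖∑' m : {m : ℤ // m ≠ 0}, g (((m : ℤ) : ℝ) * x)‖ := by
    rw [Esum, norm_mul, Complex.norm_real, Real.norm_eq_abs,
      abs_of_nonneg (Real.sqrt_nonneg x)]
  have hsx : 1 ≤ Real.sqrt x := by
    rw [show (1:ℝ) = Real.sqrt 1 by simp]
    exact Real.sqrt_le_sqrt hx
  have hsle : Real.sqrt x ≤ x := by
    nlinarith [Real.sq_sqrt hx0.le]
  have key : Real.sqrt x * (C / x ^ (n + 2) * S) ≤ C * S * (1 / x) ^ n := by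
    rw [div_pow, one_pow]
    rw [show Real.sqrt x * (C / x ^ (n + 2) * S) = C * S * (Real.sqrt x / x ^ (n + 2)) by ring]
    refine mul_le_mul_of_nonneg_left ?_ (by positivity)
    rw [div_le_div_iff₀ (by positivity) (by positivity)]
    calc Real.sqrt x * x ^ n ≤ x * x ^ n := by
          exact mul_le_mul_of_nonneg_right hsle (by positivity)
      _ = x ^ (n + 1) := by ring
      _ ≤ x ^ (n + 2) := pow_le_pow_right₀ hx (by omega)
      _ = 1 * x ^ (n + 2) := by ring
  calc ‖Esum (⇑g) x‖
      = Real.sqrt x * ‖∑' m : {m : ℤ // m ≠ 0}, g (((m : ℤ) : ℝ) * x)‖ := hE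
    _ ≤ Real.sqrt x * (C / x ^ (n + 2) * S) := by
        refine mul_le_mul_of_nonneg_left (h1.trans h2) (Real.sqrt_nonneg x)
    _ ≤ C * S * (1 / x) ^ n := key

/-- The real-place case of Appendix I, Lemma 2 of Connes' paper: for a Schwartz
function `f` on `ℝ` with `f(0) = 0` and `∫ f = 0`, the series defining `E(f)` converges
absolutely, `E(f)(x) = E(Ff)(1/x)` (Poisson summation), and `E(f)` decays rapidly as
`x → 0⁺` and `x → ∞`. -/
theorem Esum_poisson_and_decay (f : SchwartzMap ℝ ℂ)
    (hf0 : f 0 = 0) (hfI : ∫ x : ℝ, f x = 0) :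
    (∀ x : ℝ, 0 < x →
      Summable fun n : {n : ℤ // n ≠ 0} => ‖f (((n : ℤ) : ℝ) * x)‖) ∧
    (∀ x : ℝ, 0 < x → Esum (⇑f) x = Esum (FourierTransform.fourier (⇑f : ℝ → ℂ)) (1 / x)) ∧
    (∀ n : ℕ, ∃ c : ℝ, ∀ x : ℝ, 0 < x → ‖Esum (⇑f) x‖ ≤ c * min x (1 / x) ^ n) := by
  have hF0 : 𝓕 (⇑f) 0 = ∫ v : ℝ, f v := by
    rw [Real.fourier_real_eq]
    simp
  have hii : ∀ x : ℝ, 0 < x → Esum (⇑f) x = Esum (𝓕 ⇑f) (1 / x) := by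
    intro x hx
    have hx0 : x ≠ 0 := hx.ne'
    have hL : ∑' m : {n : ℤ // n ≠ 0}, f (((m : ℤ) : ℝ) * x)
        = ∑' n : ℤ, f ((n : ℝ) * x) := by
      refine tsum_subtype_eq_of_support_subset
        (f := fun n : ℤ => f ((n : ℝ) * x)) (s := {n : ℤ | n ≠ 0}) ?_
      intro n hn
      simp only [Function.mem_support] at hn
      intro h0
      apply hn
      rw [h0]
      simpa using hf0
    have hR : ∑' m : {n : ℤ // n ≠ 0}, 𝓕 (⇑f) (((m : ℤ) : ℝ) * (1 / x))
        = ∑' n : ℤ, 𝓕 (⇑f) ((n : ℝ) * (1 / x)) := by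
      refine tsum_subtype_eq_of_support_subset
        (f := fun n : ℤ => 𝓕 (⇑f) ((n : ℝ) * (1 / x)))
        (s := {n : ℤ | n ≠ 0}) ?_
      intro n hn
      simp only [Function.mem_support] at hn
      intro h0
      apply hn
      rw [h0]
      simpa [hF0] using hfI
    have hsqrt : ((Real.sqrt (1 / x) : ℝ) : ℂ) = (Real.sqrt x : ℂ) * (x : ℂ)⁻¹ := by
      have hr : Real.sqrt (1 / x) = Real.sqrt x * x⁻¹ := by
        have hsx : Real.sqrt x ≠ 0 := by positivity
        rw [one_div, Real.sqrt_inv]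
        field_simp
        rw [Real.sq_sqrt hx.le]
      rw [hr]
      push_cast
      ring
    rw [Esum, Esum, hL, hR, poisson_scaled f hx, hsqrt]
    ring
  refine ⟨fun x hx => (summable_norm_int f hx).subtype _, hii, fun n => ?_⟩
  obtain ⟨c1, hc10, hc1⟩ := esum_decay f n
  obtain ⟨c2, hc20, hc2⟩ := esum_decay (SchwartzMap.fourierTransformCLM ℝ f) n
  refine ⟨max c1 c2, fun x hx => ?_⟩
  rcases le_total 1 x with h | h
  · have hmin : min x (1 / x) = 1 / x := by
      apply min_eq_right
      calc 1 / x ≤ 1 := by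
            rw [div_le_one hx]; exact h
        _ ≤ x := h
    rw [hmin]
    calc ‖Esum (⇑f) x‖ ≤ c1 * (1 / x) ^ n := hc1 x h
      _ ≤ max c1 c2 * (1 / x) ^ n := by
          refine mul_le_mul_of_nonneg_right (le_max_left _ _) (by positivity)
  · have hmin : min x (1 / x) = x := by
      apply min_eq_left
      calc x ≤ 1 := h
        _ ≤ 1 / x := by
            rw [le_div_iff₀ hx]; simpa using h
    rw [hmin]
    have hx1 : 1 ≤ 1 / x := by
      rw [le_div_iff₀ hx]; simpa using h
    have := hc2 (1 / x) hx1
    rw [one_div_one_div] at this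
    rw [hii x hx]
    calc ‖Esum (𝓕 ⇑f) (1 / x)‖
        = ‖Esum (⇑(SchwartzMap.fourierTransformCLM ℝ f)) (1 / x)‖ := by
          rw [SchwartzMap.fourierTransformCLM_apply, SchwartzMap.fourier_coe]
      _ ≤ c2 * x ^ n := this
      _ ≤ max c1 c2 * x ^ n := by
          refine mul_le_mul_of_nonneg_right (le_max_right _ _) (by positivity)
end

section
/- ∫_ℝ (−log|u|)·e^{−π u²} du = (1/2)·log π + γ/2 + log 2. -/
open MeasureTheory Real Set

lemma Jval : ∫ t in Ioi (0:ℝ), t ^ (-(1/2) : ℝ) * (Real.log t * Real.exp (-t)) =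
    -Real.sqrt π * (Real.eulerMascheroniConstant + 2 * Real.log 2) := by
  have hre : (0:ℝ) < ((1/2 : ℂ)).re := by norm_num
  have h1 := Complex.hasDerivAt_GammaIntegral hre
  have heq : Complex.GammaIntegral =ᶠ[nhds (1/2 : ℂ)] Complex.Gamma := by
    filter_upwards [IsOpen.mem_nhds (isOpen_lt continuous_const Complex.continuous_re)
      (by norm_num : (0:ℝ) < ((1/2:ℂ)).re)] with s hs
    exact (Complex.Gamma_eq_integral hs).symm
  have h2 : HasDerivAt Complex.Gamma
      (∫ t : ℝ in Ioi 0, (t:ℂ) ^ (((1/2:ℝ):ℂ) - 1) * (Real.log t * Real.exp (-t))) (1/2 : ℂ) := by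
    have := h1.congr_of_eventuallyEq heq.symm
    rw [show (((1/2:ℝ):ℂ)) = (1/2:ℂ) by norm_num]
    exact this
  rw [show (1/2:ℂ) = ((1/2:ℝ):ℂ) by norm_num] at h2
  have h3 := h2.real_of_complex
  simp_rw [Complex.Gamma_ofReal, Complex.ofReal_re] at h3
  have huniq : (∫ t : ℝ in Ioi 0, (t:ℂ) ^ (((1/2:ℝ):ℂ) - 1) * (Real.log t * Real.exp (-t))).re
      = -Real.sqrt π * (Real.eulerMascheroniConstant + 2 * Real.log 2) :=
    h3.unique Real.hasDerivAt_Gamma_one_half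
  rw [← huniq]
  have key : ∫ t : ℝ in Ioi 0, (t:ℂ) ^ (((1/2:ℝ):ℂ) - 1) * (Real.log t * Real.exp (-t))
      = ∫ t in Ioi (0:ℝ), (((t ^ (-(1/2) : ℝ) * (Real.log t * Real.exp (-t)) : ℝ)) : ℂ) := by
    refine setIntegral_congr_fun measurableSet_Ioi (fun t ht => ?_)
    rw [show ((((1/2:ℝ):ℂ)) - 1) = ((-(1/2):ℝ):ℂ) by norm_num, ← Complex.ofReal_cpow (le_of_lt ht)]
    push_cast
    ring
  rw [key,
    show (∫ t in Ioi (0:ℝ), (((t ^ (-(1/2) : ℝ) * (Real.log t * Real.exp (-t)) : ℝ)) : ℂ))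
      = ((∫ t in Ioi (0:ℝ), t ^ (-(1/2) : ℝ) * (Real.log t * Real.exp (-t)) : ℝ) : ℂ)
      from integral_ofReal, Complex.ofReal_re]

lemma intL : IntegrableOn (fun x : ℝ => Real.log x * Real.exp (-π * x ^ 2)) (Ioi 0) := by
  have hbound : Integrable (fun x : ℝ => 2 * (x ^ (-(1/2):ℝ) * Real.exp (-π * x ^ 2))
      + x ^ (1:ℝ) * Real.exp (-π * x ^ 2)) (volume.restrict (Ioi 0)) := by
    exact ((integrableOn_rpow_mul_exp_neg_mul_sq pi_pos (by norm_num : (-1:ℝ) < -(1/2))).const_mul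
      2).add (integrableOn_rpow_mul_exp_neg_mul_sq pi_pos (by norm_num : (-1:ℝ) < 1))
  refine hbound.mono' ?_ ?_
  · exact (Real.measurable_log.mul
      ((Real.continuous_exp.comp (by continuity)).measurable)).aestronglyMeasurable
  · rw [ae_restrict_iff' measurableSet_Ioi]
    filter_upwards with x hx
    have hx0 : (0:ℝ) < x := hx
    have hexp : (0:ℝ) < Real.exp (-π * x ^ 2) := Real.exp_pos _
    have hlog : |Real.log x| ≤ 2 * x ^ (-(1/2):ℝ) + x := by
      rcases le_or_gt 1 x with h1 | h1
      · rw [abs_of_nonneg (Real.log_nonneg h1)]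
        have := Real.log_le_sub_one_of_pos hx0
        have hr : (0:ℝ) ≤ x ^ (-(1/2):ℝ) := Real.rpow_nonneg hx0.le _
        nlinarith
      · rw [abs_of_nonpos (Real.log_nonpos hx0.le h1.le)]
        have h2 : Real.log (x ^ (-(1/2):ℝ)) ≤ x ^ (-(1/2):ℝ) - 1 :=
          Real.log_le_sub_one_of_pos (Real.rpow_pos_of_pos hx0 _)
        rw [Real.log_rpow hx0] at h2
        nlinarith
    rw [norm_mul, Real.norm_eq_abs, Real.norm_eq_abs, abs_of_pos hexp]
    calc |Real.log x| * Real.exp (-π * x ^ 2)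
        ≤ (2 * x ^ (-(1/2):ℝ) + x) * Real.exp (-π * x ^ 2) :=
          mul_le_mul_of_nonneg_right hlog hexp.le
      _ = 2 * (x ^ (-(1/2):ℝ) * Real.exp (-π * x ^ 2)) + x ^ (1:ℝ) * Real.exp (-π * x ^ 2) := by
          rw [Real.rpow_one]; ring

lemma subst : (2 * π ^ (-(1/2):ℝ)) *
      ∫ x in Ioi (0:ℝ), (Real.log π + 2 * Real.log x) * Real.exp (-π * x ^ 2)
    = π⁻¹ * ∫ t in Ioi (0:ℝ), t ^ (-(1/2) : ℝ) * (Real.log t * Real.exp (-t)) := by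
  have A := integral_comp_mul_left_Ioi
    (fun t : ℝ => t ^ (-(1/2):ℝ) * (Real.log t * Real.exp (-t))) 0 pi_pos
  rw [mul_zero, smul_eq_mul] at A
  have B := integral_comp_rpow_Ioi
    (fun s : ℝ => (π * s) ^ (-(1/2):ℝ) * (Real.log (π * s) * Real.exp (-(π * s))))
    (two_ne_zero (α := ℝ))
  rw [A] at B
  rw [← B, ← integral_const_mul]
  refine setIntegral_congr_fun measurableSet_Ioi (fun x hx => ?_)
  have hx0 : (0:ℝ) < x := hx
  have hx2 : x ^ ((2:ℝ)) = x ^ (2:ℕ) := by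
    rw [show ((2:ℝ)) = ((2:ℕ):ℝ) by norm_num, Real.rpow_natCast]
  have h1 : (π * x ^ ((2:ℝ))) ^ (-(1/2):ℝ)
      = π ^ (-(1/2):ℝ) * x⁻¹ := by
    rw [hx2, Real.mul_rpow pi_pos.le (by positivity), ← Real.rpow_natCast x 2,
      ← Real.rpow_mul hx0.le]
    norm_num [Real.rpow_neg_one]
  have h2 : Real.log (π * x ^ ((2:ℝ))) = Real.log π + 2 * Real.log x := by
    rw [hx2, Real.log_mul pi_ne_zero (by positivity), Real.log_pow]
    norm_num
  simp only [smul_eq_mul]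
  rw [h1, h2, hx2]
  have : -(π * x ^ (2:ℕ)) = -π * x ^ 2 := by ring
  rw [this]
  have hxne : x ≠ 0 := hx0.ne'
  show 2 * π ^ (-(1/2):ℝ) * ((Real.log π + 2 * Real.log x) * Real.exp (-π * x ^ 2))
      = |2| * x ^ ((2:ℝ) - 1) * (π ^ (-(1/2):ℝ) * x⁻¹ * ((Real.log π + 2 * Real.log x) * Real.exp (-π * x ^ 2)))
  rw [show ((2:ℝ) - 1) = (1:ℝ) by norm_num, Real.rpow_one, abs_of_pos (by norm_num : (0:ℝ) < 2)]
  field_simp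

/-- `∫_ℝ (−log|u|)·e^{−π u²} du = (1/2)·log π + γ/2 + log 2`
(Appendix II, formula (32) of Connes' paper). -/
theorem integral_neg_log_abs_mul_exp_neg_pi_sq :
    ∫ u : ℝ, (-Real.log |u|) * Real.exp (-Real.pi * u ^ 2) =
      (1 / 2) * Real.log Real.pi + Real.eulerMascheroniConstant / 2 + Real.log 2 := by
  -- reduce to Ioi 0 by evenness
  have heven : ∫ u : ℝ, (-Real.log |u|) * Real.exp (-π * u ^ 2)
      = 2 * ∫ x in Ioi (0:ℝ), -Real.log x * Real.exp (-π * x ^ 2) := by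
    rw [← integral_comp_abs (f := fun x => -Real.log x * Real.exp (-π * x ^ 2))]
    congr 1 with u
    rw [sq_abs]
  -- the gaussian integral on Ioi 0
  have hgauss : ∫ x in Ioi (0:ℝ), Real.exp (-π * x ^ 2) = 1/2 := by
    rw [integral_gaussian_Ioi, div_self pi_ne_zero, Real.sqrt_one]
  -- split the substituted integral
  set X := ∫ x in Ioi (0:ℝ), Real.log x * Real.exp (-π * x ^ 2) with hX
  have hsplit : ∫ x in Ioi (0:ℝ), (Real.log π + 2 * Real.log x) * Real.exp (-π * x ^ 2)
      = Real.log π * (1/2) + 2 * X := by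
    have h1 : IntegrableOn (fun x : ℝ => Real.log π * Real.exp (-π * x ^ 2)) (Ioi 0) :=
      ((integrable_exp_neg_mul_sq pi_pos).restrict).const_mul _
    have h2 : IntegrableOn (fun x : ℝ => 2 * (Real.log x * Real.exp (-π * x ^ 2))) (Ioi 0) :=
      intL.const_mul 2
    calc ∫ x in Ioi (0:ℝ), (Real.log π + 2 * Real.log x) * Real.exp (-π * x ^ 2)
        = ∫ x in Ioi (0:ℝ), (Real.log π * Real.exp (-π * x ^ 2)
            + 2 * (Real.log x * Real.exp (-π * x ^ 2))) := by
          congr 1 with x; ring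
      _ = (∫ x in Ioi (0:ℝ), Real.log π * Real.exp (-π * x ^ 2))
            + ∫ x in Ioi (0:ℝ), 2 * (Real.log x * Real.exp (-π * x ^ 2)) :=
          integral_add h1 h2
      _ = Real.log π * (1/2) + 2 * X := by
          rw [integral_const_mul, integral_const_mul, hgauss]
  -- value of the substituted integral from Jval
  have hSval : ∫ x in Ioi (0:ℝ), (Real.log π + 2 * Real.log x) * Real.exp (-π * x ^ 2)
      = -(Real.eulerMascheroniConstant + 2 * Real.log 2) / 2 := by
    have h := subst
    rw [Jval] at h
    set S := ∫ x in Ioi (0:ℝ), (Real.log π + 2 * Real.log x) * Real.exp (-π * x ^ 2)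
    set a := π ^ ((1/2):ℝ) with ha
    have ha0 : (0:ℝ) < a := Real.rpow_pos_of_pos pi_pos _
    have haa : a * a = π := by
      rw [ha, ← Real.rpow_add pi_pos]; norm_num
    have hneg : π ^ (-(1/2):ℝ) = a⁻¹ := by
      rw [ha, ← Real.rpow_neg pi_pos.le]
    have hsqrt : Real.sqrt π = a := by rw [ha, Real.sqrt_eq_rpow]
    rw [hneg, hsqrt] at h
    have hπ0 : (0:ℝ) < π := pi_pos
    field_simp at h
    have h3 : S * (2*π) = (-(Real.eulerMascheroniConstant + 2*Real.log 2)/2) * (2*π) := by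
      linear_combination h - (Real.eulerMascheroniConstant + 2*Real.log 2) * haa
    exact mul_right_cancel₀ (by positivity) h3
  -- finish
  rw [heven]
  have hXval : X = (-(Real.eulerMascheroniConstant + 2 * Real.log 2) / 2
      - Real.log π * (1/2)) / 2 := by
    rw [hsplit] at hSval; linarith
  have : ∫ x in Ioi (0:ℝ), -Real.log x * Real.exp (-π * x ^ 2) = -X := by
    rw [hX, ← integral_neg]; congr 1 with x; ring
  rw [this, hXval]; ring
end

section
/- As ε → 0⁺, 2∫_{{z ∈ ℂ : |z| ≤ 1, |1−z| ≥ ε}} |1−z|^{−2} dA(z) − 2π·log(1/ε) → 0. -/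
open MeasureTheory Filter Topology intervalIntegral Real Set

lemma logsin_intervalIntegrable : IntervalIntegrable (fun x => Real.log (Real.sin x)) volume 0 (π/2) := by
  rw [intervalIntegrable_iff_integrableOn_Ioc_of_le (by positivity)]
  have hmeas : AEStronglyMeasurable (fun x => Real.log (Real.sin x)) (volume.restrict (Ioc 0 (π/2))) :=
    (Real.measurable_log.comp Real.measurable_sin).aestronglyMeasurable
  have hg : IntegrableOn (fun x : ℝ => Real.log (π/2) + 2 * x ^ (-(1/2) : ℝ)) (Ioc 0 (π/2)) volume := by
    rw [← intervalIntegrable_iff_integrableOn_Ioc_of_le (by positivity)]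
    exact (_root_.intervalIntegrable_const).add ((intervalIntegral.intervalIntegrable_rpow' (by norm_num)).const_mul 2)
  refine hg.integrable.mono' hmeas ?_
  filter_upwards [ae_restrict_mem measurableSet_Ioc] with x hx
  obtain ⟨hx0, hx1⟩ := hx
  have hsinpos : 0 < Real.sin x := Real.sin_pos_of_pos_of_lt_pi hx0 (by linarith [Real.pi_pos])
  have hsin1 : Real.sin x ≤ 1 := Real.sin_le_one x
  have hjordan : 2 / π * x ≤ Real.sin x := Real.mul_le_sin hx0.le hx1
  have hlogle : Real.log (Real.sin x) ≤ 0 := Real.log_nonpos hsinpos.le hsin1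
  rw [Real.norm_eq_abs, abs_of_nonpos hlogle]
  -- -log sin x ≤ -log (2/π * x) = log (π/2) - log x ≤ log(π/2) + 2 x^{-1/2}
  have h1 : Real.log (2 / π * x) ≤ Real.log (Real.sin x) :=
    Real.log_le_log (by positivity) hjordan
  have h2 : Real.log (2 / π * x) = - Real.log (π/2) + Real.log x := by
    rw [Real.log_mul (by positivity) (ne_of_gt hx0)]
    rw [show (2:ℝ)/π = (π/2)⁻¹ by field_simp]
    rw [Real.log_inv]
  have h3 : - Real.log x ≤ 2 * x ^ (-(1/2) : ℝ) := by
    have hxpow : (0:ℝ) < x ^ ((1:ℝ)/2) := Real.rpow_pos_of_pos hx0 _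
    have := Real.log_le_sub_one_of_pos (x := (x ^ ((1:ℝ)/2))⁻¹) (by positivity)
    rw [Real.log_inv, Real.log_rpow hx0] at this
    have hinv : (x ^ ((1:ℝ)/2))⁻¹ = x ^ (-(1/2) : ℝ) := by
      rw [← Real.rpow_neg hx0.le]
    rw [hinv] at this
    nlinarith [Real.rpow_pos_of_pos hx0 (-(1/2) : ℝ)]
  linarith

lemma logsin_intervalIntegrable' : IntervalIntegrable (fun x => Real.log (Real.sin x)) volume (π/2) π := by
  have h := logsin_intervalIntegrable.comp_sub_left π
  simp only [Real.sin_pi_sub] at h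
  rw [show π - 0 = π by ring, show π - π/2 = π/2 by ring] at h
  exact h.symm

lemma integral_logsin_half_pi_to_pi :
    ∫ x in (π/2)..π, Real.log (Real.sin x) = ∫ x in (0:ℝ)..(π/2), Real.log (Real.sin x) := by
  have h := intervalIntegral.integral_comp_sub_left (a := π/2) (b := π)
    (fun x => Real.log (Real.sin x)) π
  simp only [Real.sin_pi_sub] at h
  rw [h, show π - π = (0:ℝ) by ring, show π - π/2 = π/2 by ring]

lemma integral_logsin_pi :
    ∫ x in (0:ℝ)..π, Real.log (Real.sin x) = 2 * ∫ x in (0:ℝ)..(π/2), Real.log (Real.sin x) := by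
  rw [← intervalIntegral.integral_add_adjacent_intervals logsin_intervalIntegrable logsin_intervalIntegrable',
    integral_logsin_half_pi_to_pi]
  ring

lemma integral_logcos :
    ∫ x in (0:ℝ)..(π/2), Real.log (Real.cos x) = ∫ x in (0:ℝ)..(π/2), Real.log (Real.sin x) := by
  have h := intervalIntegral.integral_comp_sub_left (a := 0) (b := π/2)
    (fun x => Real.log (Real.sin x)) (π/2)
  simp only [Real.sin_pi_div_two_sub] at h
  rw [h]; norm_num

lemma logcos_intervalIntegrable : IntervalIntegrable (fun x => Real.log (Real.cos x)) volume 0 (π/2) := by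
  have h := logsin_intervalIntegrable.comp_sub_left (π/2)
  simp only [Real.sin_pi_div_two_sub] at h
  rw [show π/2 - 0 = π/2 by ring, show π/2 - π/2 = (0:ℝ) by ring] at h
  exact h.symm

lemma integral_log_sin_eq : ∫ x in (0:ℝ)..(π/2), Real.log (Real.sin x) = -(π/2) * Real.log 2 := by
  set I := ∫ x in (0:ℝ)..(π/2), Real.log (Real.sin x) with hI
  have key : I + I = I - (π/2) * Real.log 2 := by
    have h1 : I + I = ∫ x in (0:ℝ)..(π/2), (Real.log (Real.sin x) + Real.log (Real.cos x)) := by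
      rw [intervalIntegral.integral_add logsin_intervalIntegrable logcos_intervalIntegrable,
        integral_logcos]
    have h2 : ∀ᵐ x, x ∈ Set.uIoc (0:ℝ) (π/2) →
        Real.log (Real.sin x) + Real.log (Real.cos x)
          = Real.log (Real.sin (2*x)) - Real.log 2 := by
      have : ∀ x ∈ Set.uIoc (0:ℝ) (π/2) \ {π/2},
          Real.log (Real.sin x) + Real.log (Real.cos x)
            = Real.log (Real.sin (2*x)) - Real.log 2 := by
        intro x hx
        obtain ⟨hx, hne⟩ := hx
        rw [Set.uIoc_of_le (by positivity)] at hx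
        have hxlt : x < π/2 := lt_of_le_of_ne hx.2 hne
        have hs : 0 < Real.sin x := Real.sin_pos_of_pos_of_lt_pi hx.1 (by linarith [Real.pi_pos])
        have hc : 0 < Real.cos x := Real.cos_pos_of_mem_Ioo ⟨by linarith [Real.pi_pos, hx.1], hxlt⟩
        rw [Real.sin_two_mul, Real.log_mul (by positivity) hc.ne',
          Real.log_mul (by norm_num) hs.ne']
        ring
      have hne : ∀ᵐ x : ℝ, x ≠ π/2 := by
        rw [ae_iff]
        simpa using measure_singleton (π/2 : ℝ)
      filter_upwards [hne] with x hx hmem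
      exact this x ⟨hmem, hx⟩
    have h3 : ∫ x in (0:ℝ)..(π/2), (Real.log (Real.sin x) + Real.log (Real.cos x))
        = ∫ x in (0:ℝ)..(π/2), (Real.log (Real.sin (2*x)) - Real.log 2) := by
      apply intervalIntegral.integral_congr_ae
      filter_upwards [h2] with x hx hmem
      exact hx hmem
    have h4 : ∫ x in (0:ℝ)..(π/2), Real.log (Real.sin (2*x)) = I := by
      have h := intervalIntegral.integral_comp_mul_left (a := 0) (b := π/2)
        (fun x => Real.log (Real.sin x)) (c := 2)
      rw [h (by norm_num)]
      rw [show (2:ℝ) * 0 = 0 by ring, show (2:ℝ) * (π/2) = π by ring, integral_logsin_pi,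
        smul_eq_mul]
      ring
    have h5 : IntervalIntegrable (fun x => Real.log (Real.sin (2*x))) volume 0 (π/2) := by
      have := (logsin_intervalIntegrable.trans logsin_intervalIntegrable').comp_mul_left (c := 2)
      norm_num at this
      exact this
    rw [h1, h3, intervalIntegral.integral_sub h5 intervalIntegrable_const, h4,
      intervalIntegral.integral_const, smul_eq_mul]
    ring
  linarith

lemma logcos_intervalIntegrable_neg : IntervalIntegrable (fun x => Real.log (Real.cos x)) volume (-(π/2)) 0 := by
  have h := logcos_intervalIntegrable.comp_sub_left 0
  simp only [zero_sub, Real.cos_neg] at h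
  rw [neg_zero] at h
  exact h.symm

lemma logcos_intervalIntegrable_symm :
    IntervalIntegrable (fun x => Real.log (Real.cos x)) volume (-(π/2)) (π/2) :=
  logcos_intervalIntegrable_neg.trans logcos_intervalIntegrable

lemma integral_logcos_symm :
    ∫ x in (-(π/2))..(π/2), Real.log (Real.cos x) = -π * Real.log 2 := by
  have hneg : ∫ x in (-(π/2))..(0:ℝ), Real.log (Real.cos x)
      = ∫ x in (0:ℝ)..(π/2), Real.log (Real.cos x) := by
    have h := intervalIntegral.integral_comp_neg (a := 0) (b := π/2)
      (fun x => Real.log (Real.cos x))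
    simp only [Real.cos_neg] at h
    rw [show -(0:ℝ) = 0 by ring] at h
    exact h.symm
  rw [← intervalIntegral.integral_add_adjacent_intervals logcos_intervalIntegrable_neg
    logcos_intervalIntegrable, hneg, integral_logcos, integral_log_sin_eq]
  ring

lemma setIntegral_log_two_add_logcos :
    ∫ θ in Ioo (-(π/2)) (π/2), (Real.log 2 + Real.log (Real.cos θ)) = 0 := by
  rw [← integral_Ioc_eq_integral_Ioo, ← intervalIntegral.integral_of_le (by linarith [Real.pi_pos]),
    intervalIntegral.integral_add intervalIntegrable_const logcos_intervalIntegrable_symm,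
    integral_logcos_symm, intervalIntegral.integral_const, smul_eq_mul]
  ring

noncomputable def Gfun (ε θ : ℝ) : ℝ :=
  if ε ≤ 2 * Real.cos θ then Real.log (2 * Real.cos θ) - Real.log ε else 0

def Mset (ε : ℝ) : Set (ℝ × ℝ) := {q : ℝ × ℝ | ε ≤ q.1 ∧ q.1 ≤ 2 * Real.cos q.2}

lemma Mset_measurable (ε : ℝ) : MeasurableSet (Mset ε) := by
  apply MeasurableSet.inter
  · exact measurableSet_le measurable_const measurable_fst
  · exact measurableSet_le measurable_fst
      ((continuous_const.mul (Real.continuous_cos.comp continuous_snd)).measurable)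

noncomputable def Ffun (ε : ℝ) : ℝ × ℝ → ℝ := Set.indicator (Mset ε) (fun q => q.1⁻¹)

lemma Ffun_meas (ε : ℝ) : Measurable (Ffun ε) :=
  (measurable_fst.inv).indicator (Mset_measurable ε)

-- inner integral
lemma inner_integral {ε : ℝ} (hε0 : 0 < ε) (θ : ℝ) :
    ∫ r in Ioi (0:ℝ), Ffun ε (r, θ) = Gfun ε θ := by
  have hind : ∀ r : ℝ, Ffun ε (r, θ) = Set.indicator (Icc ε (2 * Real.cos θ)) (fun r => r⁻¹) r := by
    intro r
    simp only [Ffun, Mset, Set.indicator, Set.mem_setOf_eq, Set.mem_Icc]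
  simp_rw [hind]
  rw [MeasureTheory.integral_indicator measurableSet_Icc, Measure.restrict_restrict measurableSet_Icc]
  by_cases hc : ε ≤ 2 * Real.cos θ
  · have hinter : Icc ε (2 * Real.cos θ) ∩ Ioi 0 = Icc ε (2 * Real.cos θ) := by
      apply Set.inter_eq_self_of_subset_left
      intro x hx
      exact lt_of_lt_of_le hε0 hx.1
    rw [hinter, Gfun, if_pos hc, integral_Icc_eq_integral_Ioc,
      ← intervalIntegral.integral_of_le hc, integral_inv, Real.log_div (by linarith) hε0.ne']
    rw [Set.uIcc_of_le hc]
    intro h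
    exact absurd h.1 (by linarith)
  · have hempty : Icc ε (2 * Real.cos θ) = ∅ := Set.Icc_eq_empty hc
    rw [hempty, Set.empty_inter, Gfun, if_neg hc]
    simp

-- integrability of Ffun on the product
lemma Ffun_integrable {ε : ℝ} (hε0 : 0 < ε) :
    Integrable (Ffun ε) ((volume.restrict (Ioi (0:ℝ))).prod (volume.restrict (Ioo (-π) π))) := by
  set μ := (volume.restrict (Ioi (0:ℝ))).prod (volume.restrict (Ioo (-π) π)) with hμ
  have hbound : Integrable (Set.indicator (Icc ε 2 ×ˢ (univ : Set ℝ)) (fun _ => ε⁻¹)) μ := by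
    rw [integrable_indicator_iff (measurableSet_Icc.prod MeasurableSet.univ)]
    refine (integrableOn_const_iff (by finiteness)).mpr (Or.inr ?_)
    rw [hμ, Measure.prod_prod]
    apply ENNReal.mul_lt_top
    · exact lt_of_le_of_lt (Measure.restrict_apply_le _ _) measure_Icc_lt_top
    · rw [Measure.restrict_apply_univ]
      exact measure_Ioo_lt_top
  refine hbound.mono' ((Ffun_meas ε).aestronglyMeasurable) ?_
  refine Eventually.of_forall fun q => ?_
  by_cases hq : q ∈ Mset ε
  · have h1 : ε ≤ q.1 := hq.1
    have h2 : q.1 ≤ 2 := le_trans hq.2 (by nlinarith [Real.cos_le_one q.2])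
    have hq' : q ∈ Icc ε 2 ×ˢ (univ : Set ℝ) := ⟨⟨h1, h2⟩, trivial⟩
    rw [Ffun, Set.indicator_of_mem hq, Set.indicator_of_mem hq']
    rw [Real.norm_eq_abs, abs_of_nonneg (inv_nonneg.mpr (le_trans hε0.le h1))]
    exact inv_anti₀ hε0 h1
  · rw [Ffun, Set.indicator_of_notMem hq]
    simp only [norm_zero]
    exact Set.indicator_nonneg (fun _ _ => by positivity) _

lemma polar_step {ε : ℝ} (hε0 : 0 < ε) :
    ∫ w in {w : ℂ | ‖1 - w‖ ≤ 1 ∧ ε ≤ ‖w‖}, (‖w‖ ^ 2)⁻¹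
    = ∫ θ in Ioo (-π) π, Gfun ε θ := by
  set T : Set ℂ := {w : ℂ | ‖1 - w‖ ≤ 1 ∧ ε ≤ ‖w‖} with hT
  have hTmeas : MeasurableSet T := by
    apply MeasurableSet.inter
    · exact measurableSet_le (continuous_norm.comp (continuous_const.sub continuous_id)).measurable measurable_const
    · exact measurableSet_le measurable_const continuous_norm.measurable
  set g : ℂ → ℝ := Set.indicator T (fun w => (‖w‖ ^ 2)⁻¹) with hg
  have h1 : ∫ w in T, (‖w‖ ^ 2)⁻¹ = ∫ w, g w :=
    (MeasureTheory.integral_indicator hTmeas).symm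
  rw [h1, ← Complex.integral_comp_polarCoord_symm g]
  have htarget : polarCoord.target = Ioi (0:ℝ) ×ˢ Ioo (-π) π := rfl
  have h2 : ∫ p in polarCoord.target, p.1 • g (Complex.polarCoord.symm p)
      = ∫ p in Ioi (0:ℝ) ×ˢ Ioo (-π) π, Ffun ε p := by
    rw [htarget]
    apply setIntegral_congr_fun (measurableSet_Ioi.prod measurableSet_Ioo)
    rintro ⟨r, θ⟩ ⟨hr, hθ⟩
    simp only [smul_eq_mul]
    have hr0 : (0:ℝ) < r := hr
    have habs : ‖Complex.polarCoord.symm (r, θ)‖ = r := by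
      rw [Complex.norm_polarCoord_symm, abs_of_pos hr0]
    have hcond : ‖1 - Complex.polarCoord.symm (r, θ)‖ ≤ 1 ↔ r ≤ 2 * Real.cos θ := by
      rw [← pow_le_one_iff_of_nonneg (norm_nonneg _) two_ne_zero, Complex.sq_norm]
      have : Complex.normSq (1 - Complex.polarCoord.symm (r, θ))
          = 1 - 2 * r * Real.cos θ + r ^ 2 := by
        simp only [Complex.polarCoord_symm_apply, Complex.normSq_apply]
        simp only [Complex.sub_re, Complex.sub_im, Complex.one_re, Complex.one_im,
          Complex.mul_re, Complex.mul_im, Complex.add_re, Complex.add_im,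
          Complex.ofReal_re, Complex.ofReal_im, Complex.mul_I_re, Complex.mul_I_im,
          Complex.I_re, Complex.I_im]
        ring_nf
        nlinarith [Real.sin_sq_add_cos_sq θ]
      rw [this]
      constructor
      · intro h; nlinarith
      · intro h; nlinarith
    by_cases hmem : (r, θ) ∈ Mset ε
    · have hTm : Complex.polarCoord.symm (r, θ) ∈ T := by
        rw [hT]
        refine ⟨hcond.mpr hmem.2, ?_⟩
        rw [habs]; exact hmem.1
      rw [hg, Set.indicator_of_mem hTm, Ffun, Set.indicator_of_mem hmem, habs]
      rw [sq]
      field_simp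
    · have hTm : Complex.polarCoord.symm (r, θ) ∉ T := by
        rw [hT]
        intro hc
        exact hmem ⟨habs ▸ hc.2, hcond.mp hc.1⟩
      rw [hg, Set.indicator_of_notMem hTm, Ffun, Set.indicator_of_notMem hmem, mul_zero]
  rw [h2]
  have h3 : ∫ p in Ioi (0:ℝ) ×ˢ Ioo (-π) π, Ffun ε p
      = ∫ θ in Ioo (-π) π, ∫ r in Ioi (0:ℝ), Ffun ε (r, θ) := by
    rw [Measure.volume_eq_prod, ← Measure.prod_restrict]
    exact integral_prod_symm _ (Ffun_integrable hε0)
  rw [h3]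
  exact setIntegral_congr_fun measurableSet_Ioo fun θ _ => inner_integral hε0 θ

lemma Gfun_meas (ε : ℝ) : Measurable (Gfun ε) := by
  unfold Gfun
  apply Measurable.ite
  · exact measurableSet_le measurable_const (continuous_const.mul Real.continuous_cos).measurable
  · exact (Real.measurable_log.comp (continuous_const.mul Real.continuous_cos).measurable).sub
      measurable_const
  · exact measurable_const

lemma restrict_step {ε : ℝ} (hε0 : 0 < ε) :
    ∫ θ in Ioo (-π) π, Gfun ε θ = ∫ θ in Ioo (-(π/2)) (π/2), Gfun ε θ := by
  have hsub : Ioo (-(π/2)) (π/2) ⊆ Ioo (-π) π := by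
    apply Ioo_subset_Ioo <;> linarith [Real.pi_pos]
  have hzero : ∀ θ ∈ Ioo (-π) π \ Ioo (-(π/2)) (π/2), Gfun ε θ = 0 := by
    rintro θ ⟨hθ, hθ'⟩
    rw [Gfun, if_neg]
    intro hc
    have hcos : 0 < Real.cos θ := by linarith
    have : θ ∈ Ioo (-(π/2)) (π/2) := by
      constructor
      · by_contra h
        push_neg at h
        have : Real.cos (-θ) ≤ 0 := Real.cos_nonpos_of_pi_div_two_le_of_le (by linarith)
          (by linarith [hθ.1, Real.pi_pos])
        rw [Real.cos_neg] at this; linarith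
      · by_contra h
        push_neg at h
        have : Real.cos θ ≤ 0 := Real.cos_nonpos_of_pi_div_two_le_of_le h
          (by linarith [hθ.2, Real.pi_pos])
        linarith
    exact hθ' this
  rw [← MeasureTheory.integral_indicator measurableSet_Ioo,
    ← MeasureTheory.integral_indicator measurableSet_Ioo]
  congr 1
  ext θ
  by_cases h1 : θ ∈ Ioo (-(π/2)) (π/2)
  · rw [Set.indicator_of_mem h1, Set.indicator_of_mem (hsub h1)]
  · rw [Set.indicator_of_notMem h1]
    by_cases h2 : θ ∈ Ioo (-π) π
    · rw [Set.indicator_of_mem h2]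
      exact hzero θ ⟨h2, h1⟩
    · rw [Set.indicator_of_notMem h2]

lemma Gfun_integrableOn {ε : ℝ} (hε0 : 0 < ε) :
    IntegrableOn (Gfun ε) (Ioo (-(π/2)) (π/2)) volume := by
  apply Measure.integrableOn_of_bounded (M := |Real.log 2 - Real.log ε|)
  · exact ne_of_lt measure_Ioo_lt_top
  · exact (Gfun_meas ε).aestronglyMeasurable
  · filter_upwards with θ
    rw [Real.norm_eq_abs, Gfun]
    split_ifs with h
    · have h2 : Real.log (2 * Real.cos θ) ≤ Real.log 2 := by
        apply Real.log_le_log (by linarith)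
        nlinarith [Real.cos_le_one θ]
      have h0 : Real.log ε ≤ Real.log (2 * Real.cos θ) := Real.log_le_log hε0 h
      rw [abs_of_nonneg (by linarith), abs_of_nonneg (by linarith)]
      linarith
    · simp [abs_nonneg]

-- Step A: translation
lemma translate_step {ε : ℝ} :
    ∫ z in {z : ℂ | ‖z‖ ≤ 1 ∧ ε ≤ ‖1 - z‖}, (‖1 - z‖ ^ 2)⁻¹
    = ∫ w in {w : ℂ | ‖1 - w‖ ≤ 1 ∧ ε ≤ ‖w‖}, (‖w‖ ^ 2)⁻¹ := by
  set T : Set ℂ := {w : ℂ | ‖1 - w‖ ≤ 1 ∧ ε ≤ ‖w‖} with hT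
  have hTmeas : MeasurableSet T := by
    apply MeasurableSet.inter
    · exact measurableSet_le (continuous_norm.comp (continuous_const.sub continuous_id)).measurable measurable_const
    · exact measurableSet_le measurable_const continuous_norm.measurable
  set g : ℂ → ℝ := Set.indicator T (fun w => (‖w‖ ^ 2)⁻¹) with hg
  have hS : MeasurableSet {z : ℂ | ‖z‖ ≤ 1 ∧ ε ≤ ‖1 - z‖} := by
    apply MeasurableSet.inter
    · exact measurableSet_le continuous_norm.measurable measurable_const
    · exact measurableSet_le measurable_const (continuous_norm.comp (continuous_const.sub continuous_id)).measurable
  rw [← MeasureTheory.integral_indicator hS, ← MeasureTheory.integral_indicator hTmeas]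
  have hpt : ∀ z : ℂ, Set.indicator {z : ℂ | ‖z‖ ≤ 1 ∧ ε ≤ ‖1 - z‖}
      (fun z => (‖1 - z‖ ^ 2)⁻¹) z = g (1 - z) := by
    intro z
    rw [hg]
    by_cases hz : z ∈ {z : ℂ | ‖z‖ ≤ 1 ∧ ε ≤ ‖1 - z‖}
    · rw [Set.indicator_of_mem hz, Set.indicator_of_mem]
      simp only [hT, Set.mem_setOf_eq, sub_sub_cancel]
      exact ⟨hz.1, hz.2⟩
    · rw [Set.indicator_of_notMem hz, Set.indicator_of_notMem]
      simp only [hT, Set.mem_setOf_eq, sub_sub_cancel]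
      intro h
      exact hz ⟨h.1, h.2⟩
  calc ∫ z, Set.indicator {z : ℂ | ‖z‖ ≤ 1 ∧ ε ≤ ‖1 - z‖}
        (fun z => (‖1 - z‖ ^ 2)⁻¹) z
      = ∫ z, g (1 - z) := by simp_rw [hpt]
    _ = ∫ z, g z := integral_sub_left_eq_self g volume 1

lemma logcos_integrableOn :
    IntegrableOn (fun θ => Real.log (Real.cos θ)) (Ioo (-(π/2)) (π/2)) volume :=
  ((intervalIntegrable_iff_integrableOn_Ioc_of_le (by linarith [Real.pi_pos])).mp
    logcos_intervalIntegrable_symm).mono_set Ioo_subset_Ioc_self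

noncomputable def Dfun (ε θ : ℝ) : ℝ :=
  Gfun ε θ - (Real.log 2 + Real.log (Real.cos θ) - Real.log ε)

lemma aux_integrableOn (ε : ℝ) :
    IntegrableOn (fun θ => Real.log 2 + Real.log (Real.cos θ) - Real.log ε)
      (Ioo (-(π/2)) (π/2)) volume :=
  (((integrableOn_const_iff (by finiteness)).mpr (Or.inr measure_Ioo_lt_top)).add logcos_integrableOn).sub
    ((integrableOn_const_iff (by finiteness)).mpr (Or.inr measure_Ioo_lt_top))

lemma key_eq {ε : ℝ} (hε0 : 0 < ε) :
    2 * (∫ z in {z : ℂ | ‖z‖ ≤ 1 ∧ ε ≤ ‖1 - z‖},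
          (‖1 - z‖ ^ 2)⁻¹)
      - 2 * Real.pi * Real.log (1 / ε)
    = 2 * ∫ θ in Ioo (-(π/2)) (π/2), Dfun ε θ := by
  rw [translate_step, polar_step hε0, restrict_step hε0]
  have h1 : ∫ θ in Ioo (-(π/2)) (π/2), Dfun ε θ
      = (∫ θ in Ioo (-(π/2)) (π/2), Gfun ε θ)
        - ∫ θ in Ioo (-(π/2)) (π/2), (Real.log 2 + Real.log (Real.cos θ) - Real.log ε) := by
    exact integral_sub (Gfun_integrableOn hε0) (aux_integrableOn ε)
  have h2 : ∫ θ in Ioo (-(π/2)) (π/2), (Real.log 2 + Real.log (Real.cos θ) - Real.log ε)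
      = - (π * Real.log ε) := by
    have hsub : ∫ θ in Ioo (-(π/2)) (π/2), (Real.log 2 + Real.log (Real.cos θ) - Real.log ε)
        = (∫ θ in Ioo (-(π/2)) (π/2), (Real.log 2 + Real.log (Real.cos θ)))
          - ∫ θ in Ioo (-(π/2)) (π/2), (fun _ => Real.log ε) θ :=
      integral_sub (((integrableOn_const_iff (by finiteness)).mpr (Or.inr measure_Ioo_lt_top)).add
        logcos_integrableOn) ((integrableOn_const_iff (by finiteness)).mpr (Or.inr measure_Ioo_lt_top))
    rw [hsub, setIntegral_log_two_add_logcos, setIntegral_const, measureReal_def, Real.volume_Ioo, smul_eq_mul]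
    rw [show (π/2 - -(π/2)) = π by ring, ENNReal.toReal_ofReal Real.pi_pos.le]
    ring
  rw [h1, h2, one_div, Real.log_inv]
  ring

/-- As `ε → 0⁺`, `j(ε) = ∫_{|z|≤1, |1−z|≥ε} |dz∧dz̄|/|1−z|² = 2π log(1/ε) + o(1)`
(Appendix II, formulas (49)–(53) of Connes' paper), where `|dz∧dz̄| = 2·dA`. -/
theorem integral_inv_sq_one_sub_asymp :
    Tendsto (fun ε : ℝ =>
        2 * (∫ z in {z : ℂ | ‖z‖ ≤ 1 ∧ ε ≤ ‖1 - z‖},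
              (‖1 - z‖ ^ 2)⁻¹)
          - 2 * Real.pi * Real.log (1 / ε))
      (𝓝[>] (0 : ℝ)) (𝓝 0) := by
  have hDCT : Tendsto (fun ε => ∫ θ in Ioo (-(π/2)) (π/2), Dfun ε θ)
      (𝓝[>] (0:ℝ)) (𝓝 (∫ θ in Ioo (-(π/2)) (π/2), (0:ℝ))) := by
    apply MeasureTheory.tendsto_integral_filter_of_dominated_convergence
      (fun θ => |Real.log 2 + Real.log (Real.cos θ)|)
    · filter_upwards with ε
      exact (((Gfun_meas ε).sub (((Real.measurable_log.comp
        Real.continuous_cos.measurable).const_add (Real.log 2)).sub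
        measurable_const))).aestronglyMeasurable
    · filter_upwards [Ioo_mem_nhdsGT_of_mem (Set.mem_Ico.mpr ⟨le_refl 0, zero_lt_one⟩)]
        with ε hε
      obtain ⟨hε0, hε1⟩ := hε
      filter_upwards [ae_restrict_mem measurableSet_Ioo] with θ hθ
      have hcos : 0 < Real.cos θ := Real.cos_pos_of_mem_Ioo hθ
      have hlog : Real.log (2 * Real.cos θ) = Real.log 2 + Real.log (Real.cos θ) :=
        Real.log_mul two_ne_zero hcos.ne'
      rw [Dfun, Gfun, Real.norm_eq_abs]
      split_ifs with h
      · rw [hlog]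
        simp [abs_nonneg]
      · push_neg at h
        have h1 : Real.log (2 * Real.cos θ) < 0 := Real.log_neg (by linarith) (by linarith)
        have h2 : Real.log ε ≤ 0 := Real.log_nonpos hε0.le hε1.le
        have h3 : Real.log (2 * Real.cos θ) ≤ Real.log ε := Real.log_le_log (by linarith) h.le
        rw [← hlog, abs_of_nonneg (by linarith), abs_of_nonpos h1.le]
        linarith
    · exact ((((integrableOn_const_iff (by finiteness)).mpr (Or.inr measure_Ioo_lt_top)).add
        logcos_integrableOn)).abs
    · filter_upwards [ae_restrict_mem measurableSet_Ioo] with θ hθ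
      have hcos : 0 < Real.cos θ := Real.cos_pos_of_mem_Ioo hθ
      have hlog : Real.log (2 * Real.cos θ) = Real.log 2 + Real.log (Real.cos θ) :=
        Real.log_mul two_ne_zero hcos.ne'
      apply Tendsto.congr' (f₁ := fun _ => (0:ℝ))
      · filter_upwards [Ioo_mem_nhdsGT_of_mem
          (show (0:ℝ) ∈ Ico (0:ℝ) (2 * Real.cos θ) from ⟨le_refl 0, by linarith⟩)] with ε hε
        rw [Dfun, Gfun, if_pos (by linarith [hε.2]), hlog]
        ring
      · exact tendsto_const_nhds
  rw [MeasureTheory.integral_zero] at hDCT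
  have h2 : Tendsto (fun ε => 2 * ∫ θ in Ioo (-(π/2)) (π/2), Dfun ε θ)
      (𝓝[>] (0:ℝ)) (𝓝 0) := by
    have := hDCT.const_mul (2:ℝ)
    simpa using this
  apply h2.congr'
  filter_upwards [self_mem_nhdsWithin] with ε hε
  exact (key_eq hε).symm
end

section
/- Let p be a prime, μ the Haar measure on (ℚ_p, +) with μ(ℤ_p) = 1, and α(x) = e^{2πi{x}_p} the standard additive character of ℚ_p ({x}_p the p-adic fractional part), which is trivial on ℤ_p and nontrivial on p^{−1}ℤ_p. Then ∫_{ℚ_p} (log|x|_p) · α(x) · ( 1_{ℤ_p}(x) − p^{−1}·1_{p^{−1}ℤ_p}(x) ) dμ(x) = 0. -/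
open MeasureTheory

open MeasureTheory Pointwise
open scoped ENNReal NNReal
set_option linter.unusedSectionVars false

namespace ConnesAux

variable (p : ℕ) [Fact p.Prime]

/-- closed ball of radius p^{-n} -/
def B (n : ℤ) : Set ℚ_[p] := {x | ‖x‖ ≤ (p : ℝ) ^ (-n)}

variable {p}

lemma hp1 : (1:ℝ) < p := by exact_mod_cast (Fact.out : p.Prime).one_lt

lemma hppos : (0:ℝ) < p := lt_trans one_pos hp1

lemma mem_B {n : ℤ} {x : ℚ_[p]} : x ∈ B p n ↔ ‖x‖ ≤ (p:ℝ) ^ (-n) := Iff.rfl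

lemma isClosed_B (n : ℤ) : IsClosed (B p n) :=
  isClosed_le (continuous_norm) continuous_const

lemma isCompact_B (n : ℤ) : IsCompact (B p n) := by
  have : B p n = Metric.closedBall 0 ((p:ℝ) ^ (-n)) := by
    ext x; simp [B, Metric.mem_closedBall, dist_eq_norm]
  rw [this]
  exact isCompact_closedBall 0 _

lemma B_partition (n : ℤ) :
    B p n = ⋃ c : Fin p, ((c : ℚ_[p]) * (p:ℚ_[p]) ^ n) +ᵥ B p (n + 1) := by
  ext x
  simp only [Set.mem_iUnion, Set.mem_vadd_set_iff_neg_vadd_mem, vadd_eq_add, mem_B]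
  constructor
  · intro hx
    have hpn : ((p:ℚ_[p]) ^ n) ≠ 0 := zpow_ne_zero _ (by exact_mod_cast (Fact.out : p.Prime).ne_zero)
    set y : ℚ_[p] := x / (p:ℚ_[p]) ^ n with hy
    have hynorm : ‖y‖ ≤ 1 := by
      rw [hy, norm_div, Padic.norm_p_zpow, div_le_one (zpow_pos hppos _)]
      simpa using hx
    set z : ℤ_[p] := ⟨y, hynorm⟩ with hz
    set c : ℕ := z.appr 1 with hc
    have hclt : c < p := by simpa using z.appr_lt 1
    refine ⟨⟨c, hclt⟩, ?_⟩
    have hspan : z - (c:ℤ_[p]) ∈ Ideal.span {(p:ℤ_[p]) ^ 1} := by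
      simpa using z.appr_spec 1
    have hznorm : ‖z - (c:ℤ_[p])‖ ≤ (p:ℝ) ^ (-(1:ℤ)) := by
      rw [show (-(1:ℤ)) = -((1:ℕ):ℤ) by norm_num]
      exact (PadicInt.norm_le_pow_iff_mem_span_pow _ 1).2 hspan
    have hq : ‖y - (c:ℚ_[p])‖ ≤ (p:ℝ) ^ (-(1:ℤ)) := by
      have : ((z - (c:ℤ_[p]) : ℤ_[p]) : ℚ_[p]) = y - (c:ℚ_[p]) := by rw [PadicInt.coe_sub, PadicInt.coe_natCast]
      rw [← this, ← PadicInt.norm_def]; exact hznorm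
    have hxeq : -( (c:ℚ_[p]) * (p:ℚ_[p])^n) + x = (y - (c:ℚ_[p])) * (p:ℚ_[p])^n := by
      field_simp [hy]
      rw [hy]; field_simp; ring
    rw [hxeq, norm_mul, Padic.norm_p_zpow]
    calc ‖y - (c:ℚ_[p])‖ * (p:ℝ) ^ (-n) ≤ (p:ℝ) ^ (-(1:ℤ)) * (p:ℝ)^(-n) := by
          apply mul_le_mul_of_nonneg_right hq (le_of_lt (zpow_pos hppos _))
      _ = (p:ℝ) ^ (-(n+1)) := by rw [← zpow_add₀ (hppos (p:=p)).ne']; ring_nf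
  · rintro ⟨c, hc⟩
    have h1 : ‖(c : ℚ_[p]) * (p:ℚ_[p]) ^ n‖ ≤ (p:ℝ) ^ (-n) := by
      rw [norm_mul, Padic.norm_p_zpow]
      have : ‖((c:ℕ) : ℚ_[p])‖ ≤ 1 := by exact_mod_cast Padic.norm_int_le_one ((c:ℕ):ℤ)
      calc ‖((c:ℕ):ℚ_[p])‖ * (p:ℝ)^(-n) ≤ 1 * (p:ℝ)^(-n) :=
            mul_le_mul_of_nonneg_right this (le_of_lt (zpow_pos hppos _))
        _ = (p:ℝ)^(-n) := one_mul _
    have h2 : ‖-((c : ℚ_[p]) * (p:ℚ_[p]) ^ n) + x‖ ≤ (p:ℝ) ^ (-(n+1)) := hc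
    have hx : x = ((c : ℚ_[p]) * (p:ℚ_[p]) ^ n) + (-((c : ℚ_[p]) * (p:ℚ_[p]) ^ n) + x) := by ring
    rw [hx]
    refine le_trans (Padic.nonarchimedean _ _) ?_
    refine max_le h1 (le_trans h2 ?_)
    apply zpow_le_zpow_right₀ (le_of_lt hp1)
    omega

lemma norm_fin_sub_one {c d : Fin p} (h : c ≠ d) : ‖((c:ℚ_[p])) - (d:ℚ_[p])‖ = 1 := by
  have hne : ((c:ℕ):ℤ) - ((d:ℕ):ℤ) ≠ 0 := by
    intro hcd; apply h; apply Fin.ext; omega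
  have hnd : ¬ ((p:ℤ) ∣ ((c:ℕ):ℤ) - ((d:ℕ):ℤ)) := by
    intro hdvd
    have h1 : ((c:ℕ):ℤ) < p := by exact_mod_cast c.isLt
    have h2 : ((d:ℕ):ℤ) < p := by exact_mod_cast d.isLt
    have h3 : (0:ℤ) ≤ ((c:ℕ):ℤ) := by positivity
    have h4 : (0:ℤ) ≤ ((d:ℕ):ℤ) := by positivity
    have hp0 : (0:ℤ) < p := by exact_mod_cast (Fact.out : p.Prime).pos
    have h5 : |((c:ℕ):ℤ) - ((d:ℕ):ℤ)| < p := by rw [abs_lt]; omega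
    have h6 : (p:ℤ) ≤ |((c:ℕ):ℤ) - ((d:ℕ):ℤ)| :=
      Int.le_of_dvd (abs_pos.mpr hne) ((dvd_abs _ _).mpr hdvd)
    linarith
  have hle : ‖((((c:ℕ):ℤ) - ((d:ℕ):ℤ) : ℤ) : ℚ_[p])‖ ≤ 1 := Padic.norm_int_le_one _
  have hlt : ¬ ‖((((c:ℕ):ℤ) - ((d:ℕ):ℤ) : ℤ) : ℚ_[p])‖ < 1 := by
    rw [Padic.norm_intCast_lt_one_iff]; exact hnd
  have heq : ((((c:ℕ):ℤ) - ((d:ℕ):ℤ) : ℤ) : ℚ_[p]) = (c:ℚ_[p]) - (d:ℚ_[p]) := by push_cast; ring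
  rw [← heq]; linarith [lt_or_ge (‖((((c:ℕ):ℤ) - ((d:ℕ):ℤ) : ℤ) : ℚ_[p])‖) 1]

lemma B_disjoint (n : ℤ) :
    Pairwise (Function.onFun Disjoint fun c : Fin p => ((c : ℚ_[p]) * (p:ℚ_[p]) ^ n) +ᵥ B p (n + 1)) := by
  intro c d hcd
  rw [Function.onFun, Set.disjoint_left]
  rintro x hc hd
  rw [Set.mem_vadd_set_iff_neg_vadd_mem, vadd_eq_add] at hc hd
  have hdiff : -((c:ℚ_[p]) * (p:ℚ_[p])^n) + x - (-((d:ℚ_[p]) * (p:ℚ_[p])^n) + x)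
      = ((d:ℚ_[p]) - (c:ℚ_[p])) * (p:ℚ_[p])^n := by ring
  have h1 : ‖((d:ℚ_[p]) - (c:ℚ_[p])) * (p:ℚ_[p])^n‖ ≤ (p:ℝ)^(-(n+1)) := by
    rw [← hdiff]
    have : ‖(-((c:ℚ_[p]) * (p:ℚ_[p])^n) + x) + (-(-((d:ℚ_[p]) * (p:ℚ_[p])^n) + x))‖
        ≤ max ‖-((c:ℚ_[p]) * (p:ℚ_[p])^n) + x‖ ‖-((d:ℚ_[p]) * (p:ℚ_[p])^n) + x‖ := by
      refine le_trans (Padic.nonarchimedean _ _) ?_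
      rw [norm_neg]
    rw [sub_eq_add_neg]
    exact le_trans this (max_le hc hd)
  rw [norm_mul, Padic.norm_p_zpow, norm_fin_sub_one hcd.symm, one_mul] at h1
  have : (p:ℝ)^(-(n+1)) < (p:ℝ)^(-n) := by
    apply zpow_lt_zpow_right₀ hp1; omega
  linarith

variable [MeasurableSpace ℚ_[p]] [BorelSpace ℚ_[p]]

lemma measB (n : ℤ) : MeasurableSet (B p n) := (isClosed_B n).measurableSet

lemma measure_B_rec (μ : Measure ℚ_[p]) [μ.IsAddHaarMeasure] (n : ℤ) :
    μ (B p n) = p * μ (B p (n+1)) := by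
  conv_lhs => rw [B_partition n]
  rw [measure_iUnion (B_disjoint n) (fun c => (measB (n+1)).const_vadd _)]
  simp only [measure_vadd]
  simp [tsum_fintype]

lemma measure_B_ne_top (μ : Measure ℚ_[p]) [μ.IsAddHaarMeasure] (n : ℤ) :
    μ (B p n) ≠ ⊤ := (IsCompact.measure_lt_top (isCompact_B n)).ne

lemma measure_B (μ : Measure ℚ_[p]) [μ.IsAddHaarMeasure] (hμ1 : μ (B p 0) = 1) (n : ℤ) :
    μ (B p n) = (p : ℝ≥0∞) ^ (-n) := by
  have hp0 : (p : ℝ≥0∞) ≠ 0 := by exact_mod_cast (Fact.out : p.Prime).ne_zero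
  have hpt : (p : ℝ≥0∞) ≠ ⊤ := ENNReal.natCast_ne_top p
  induction n using Int.induction_on with
  | zero => simpa using hμ1
  | succ k ih =>
      have h := measure_B_rec μ (k : ℤ)
      rw [ih] at h
      have heq : μ (B p ((k:ℤ)+1)) = (p : ℝ≥0∞) ^ (-(k:ℤ)) / p := by
        rw [ENNReal.eq_div_iff hp0 hpt, ← h]
      rw [heq, show (-((k:ℤ)+1)) = (-(k:ℤ)) + (-1) by ring, ENNReal.zpow_add hp0 hpt,
        div_eq_mul_inv, zpow_neg_one]
  | pred k ih =>
      have h := measure_B_rec μ (-(k:ℤ)-1)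
      rw [show (-(k:ℤ)-1)+1 = -(k:ℤ) by ring, ih] at h
      rw [h, show (-(-(k:ℤ)-1)) = (- -(k:ℤ)) + 1 by ring, ENNReal.zpow_add hp0 hpt, zpow_one,
        mul_comm]

end ConnesAux

namespace ConnesAux

variable {p : ℕ} [Fact p.Prime]

/-- sphere of radius p^{-k} -/
def S (p : ℕ) [Fact p.Prime] (k : ℤ) : Set ℚ_[p] := B p k \ B p (k + 1)

lemma norm_eq_of_mem_S {k : ℤ} {x : ℚ_[p]} (hx : x ∈ S p k) : ‖x‖ = (p:ℝ)^(-k) := by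
  obtain ⟨h1, h2⟩ := hx
  rw [mem_B] at h1
  have h2' : ¬ ‖x‖ ≤ (p:ℝ)^(-(k+1)) := h2
  have hx0 : x ≠ 0 := by
    rintro rfl
    exact h2' (by simp [le_of_lt (zpow_pos (hppos (p:=p)) _)])
  rw [Padic.norm_eq_zpow_neg_valuation hx0] at h1 h2' ⊢
  have hv1 : -x.valuation ≤ -k := (zpow_le_zpow_iff_right₀ (hp1 (p:=p))).1 h1
  have hv2 : -(k+1) < -x.valuation := by
    by_contra hcon
    push_neg at hcon
    exact h2' (by exact (zpow_le_zpow_iff_right₀ (hp1 (p:=p))).2 hcon)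
  congr 1
  omega

lemma mem_S_of_norm {k : ℤ} {x : ℚ_[p]} (h : ‖x‖ = (p:ℝ)^(-k)) : x ∈ S p k := by
  constructor
  · rw [mem_B, h]
  · rw [mem_B, h]
    intro hcon
    have := (zpow_le_zpow_iff_right₀ (hp1 (p:=p))).1 hcon
    omega

variable [MeasurableSpace ℚ_[p]] [BorelSpace ℚ_[p]]

lemma measS (k : ℤ) : MeasurableSet (S p k) := (measB k).diff (measB (k+1))

lemma measure_S (μ : Measure ℚ_[p]) [μ.IsAddHaarMeasure] (hμ1 : μ (B p 0) = 1) (k : ℤ) :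
    μ (S p k) = (p : ℝ≥0∞) ^ (-k) - (p : ℝ≥0∞) ^ (-(k+1)) := by
  rw [S, measure_diff ?_ (measB (k+1)).nullMeasurableSet (measure_B_ne_top μ (k+1)),
    measure_B μ hμ1, measure_B μ hμ1]
  intro x hx
  rw [mem_B] at hx ⊢
  refine le_trans hx ?_
  apply zpow_le_zpow_right₀ (le_of_lt hp1)
  omega

lemma measure_singleton_zero (μ : Measure ℚ_[p]) [μ.IsAddHaarMeasure] (hμ1 : μ (B p 0) = 1) :
    μ {(0 : ℚ_[p])} = 0 := by
  have hp0 : (p : ℝ≥0∞) ≠ 0 := by exact_mod_cast (Fact.out : p.Prime).ne_zero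
  have hpt : (p : ℝ≥0∞) ≠ ⊤ := ENNReal.natCast_ne_top p
  by_contra h
  obtain ⟨n, hn⟩ := ENNReal.exists_inv_two_pow_lt h
  have hsub : {(0:ℚ_[p])} ⊆ B p n := by
    intro x hx; simp only [Set.mem_singleton_iff] at hx; subst hx
    rw [mem_B]; simp [le_of_lt (zpow_pos (hppos (p:=p)) _)]
  have hle : μ {(0:ℚ_[p])} ≤ (p:ℝ≥0∞) ^ (-(n:ℤ)) := (measure_mono hsub).trans_eq (measure_B μ hμ1 n)
  have h2p : (2:ℝ≥0∞)⁻¹ ≥ (p:ℝ≥0∞)⁻¹ := by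
    apply ENNReal.inv_le_inv.2
    exact_mod_cast Nat.ofNat_le_cast.2 (Fact.out : p.Prime).two_le
  have hcalc : (p:ℝ≥0∞) ^ (-(n:ℤ)) ≤ (2:ℝ≥0∞)⁻¹ ^ n := by
    rw [ENNReal.zpow_neg, show ((n:ℤ)) = ((n:ℕ):ℤ) from rfl, zpow_natCast,
      ENNReal.inv_pow]
    exact pow_le_pow_left' h2p n
  exact absurd (hle.trans hcalc) (not_le.mpr hn)

end ConnesAux

namespace ConnesAux

variable {p : ℕ} [Fact p.Prime]

lemma zpow_inj {m n : ℤ} (h : (p:ℝ) ^ m = (p:ℝ) ^ n) : m = n :=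
  le_antisymm ((zpow_le_zpow_iff_right₀ (hp1 (p:=p))).1 h.le)
    ((zpow_le_zpow_iff_right₀ (hp1 (p:=p))).1 h.ge)

lemma S_disjoint : Pairwise (Function.onFun Disjoint fun k : ℕ => S p (k : ℤ)) := by
  intro j k hjk
  rw [Function.onFun, Set.disjoint_left]
  intro x hj hk
  have h1 := norm_eq_of_mem_S hj
  have h2 := norm_eq_of_mem_S hk
  rw [h1] at h2
  have := zpow_inj h2
  omega

lemma B0_diff : B p 0 \ {0} = ⋃ k : ℕ, S p (k : ℤ) := by
  ext x
  simp only [Set.mem_diff, Set.mem_singleton_iff, Set.mem_iUnion]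
  constructor
  · rintro ⟨hx, hx0⟩
    rw [mem_B] at hx
    have hval : ‖x‖ = (p:ℝ) ^ (-x.valuation) := Padic.norm_eq_zpow_neg_valuation hx0
    have hv0 : 0 ≤ x.valuation := by
      rw [hval] at hx
      have : -x.valuation ≤ -0 := by
        apply (zpow_le_zpow_iff_right₀ (hp1 (p:=p))).1
        simpa using hx
      omega
    refine ⟨x.valuation.toNat, mem_S_of_norm ?_⟩
    rw [hval]
    congr 1
    omega
  · rintro ⟨k, hk⟩
    have h1 := norm_eq_of_mem_S hk
    constructor
    · rw [mem_B, h1]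
      apply zpow_le_zpow_right₀ (le_of_lt hp1)
      omega
    · intro h0
      rw [h0, norm_zero] at h1
      exact absurd h1.symm (ne_of_gt (zpow_pos (hppos (p:=p)) _))

end ConnesAux

namespace ConnesAux

variable {p : ℕ} [Fact p.Prime] [MeasurableSpace ℚ_[p]] [BorelSpace ℚ_[p]]

lemma B_add_mem {n : ℤ} {u v : ℚ_[p]} (hu : u ∈ B p n) (hv : v ∈ B p n) : u + v ∈ B p n := by
  rw [mem_B] at hu hv ⊢
  exact le_trans (Padic.nonarchimedean u v) (max_le hu hv)

lemma char_setIntegral_eq_zero (μ : Measure ℚ_[p]) [μ.IsAddHaarMeasure]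
    (α : ℚ_[p] → ℂ) (hαadd : ∀ x y, α (x + y) = α x * α y)
    (n : ℤ) (y : ℚ_[p]) (hy : y ∈ B p n) (hαy : α y ≠ 1) :
    ∫ x in B p n, α x ∂μ = 0 := by
  set g : ℚ_[p] → ℂ := (B p n).indicator α with hg
  have key : ∀ x, g (y + x) = α y * g x := by
    intro x
    by_cases hx : x ∈ B p n
    · have hyx : y + x ∈ B p n := B_add_mem hy hx
      simp [hg, Set.indicator_of_mem, hx, hyx, hαadd y x]
    · have hyx : y + x ∉ B p n := by
        intro hcon
        apply hx
        have hxeq : x = -y + (y + x) := by ring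
        rw [hxeq]
        refine B_add_mem ?_ hcon
        rw [mem_B, norm_neg]; exact hy
      simp [hg, Set.indicator_of_notMem, hx, hyx]
  have h1 : ∫ x, g (y + x) ∂μ = ∫ x, g x ∂μ := integral_add_left_eq_self g y
  simp only [key] at h1
  rw [integral_const_mul] at h1
  have h2 : (α y - 1) * ∫ x, g x ∂μ = 0 := by rw [sub_mul, one_mul, h1, sub_self]
  rcases mul_eq_zero.1 h2 with h | h
  · exact absurd (sub_eq_zero.1 h) hαy
  · rw [← integral_indicator (measB n)]; exact h

lemma toReal_pow_B (n : ℤ) : ((p : ℝ≥0∞) ^ n).toReal = (p:ℝ) ^ n := by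
  have hp0 : ((p:ℝ≥0)) ≠ 0 := by exact_mod_cast (Fact.out : p.Prime).ne_zero
  rw [show ((p : ℝ≥0∞)) = ((p:ℝ≥0) : ℝ≥0∞) by simp, ← ENNReal.coe_zpow hp0,
    ENNReal.coe_toReal, NNReal.coe_zpow]
  simp

lemma measure_S_toReal (μ : Measure ℚ_[p]) [μ.IsAddHaarMeasure] (hμ1 : μ (B p 0) = 1) (k : ℤ) :
    (μ (S p k)).toReal = (p:ℝ) ^ (-k) - (p:ℝ) ^ (-(k+1)) := by
  have hle : (p : ℝ≥0∞) ^ (-(k+1)) ≤ (p : ℝ≥0∞) ^ (-k) := by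
    rw [← measure_B μ hμ1, ← measure_B μ hμ1]
    apply measure_mono
    intro x hx
    rw [mem_B] at hx ⊢
    refine le_trans hx (zpow_le_zpow_right₀ (le_of_lt hp1) (by omega))
  rw [measure_S μ hμ1, ENNReal.toReal_sub_of_le hle (by
      rw [← measure_B μ hμ1 k]; exact measure_B_ne_top μ k),
    toReal_pow_B, toReal_pow_B]

lemma log_integrableOn (μ : Measure ℚ_[p]) [μ.IsAddHaarMeasure] (hμ1 : μ (B p 0) = 1) :
    IntegrableOn (fun x : ℚ_[p] => Real.log ‖x‖) (B p 0) μ := by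
  have hmeas : Measurable fun x : ℚ_[p] => Real.log ‖x‖ :=
    Real.measurable_log.comp measurable_norm
  have hae : (B p 0 : Set ℚ_[p]) =ᵐ[μ] ⋃ k : ℕ, S p (k:ℤ) := by
    rw [← B0_diff]
    exact (MeasureTheory.diff_ae_eq_self.mpr (le_antisymm
      (le_trans (measure_mono Set.inter_subset_right) (measure_singleton_zero μ hμ1).le)
      (zero_le))).symm
  refine ⟨hmeas.aestronglyMeasurable, ?_⟩
  have hp0 : ((p:ℝ≥0)) ≠ 0 := by exact_mod_cast (Fact.out : p.Prime).ne_zero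
  have key : ∫⁻ x in B p 0, (‖Real.log ‖x‖‖₊ : ℝ≥0∞) ∂μ
      ≤ ∑' k : ℕ, ((‖(k:ℝ) * Real.log p‖₊ * (p:ℝ≥0) ^ (-(k:ℤ)) : ℝ≥0) : ℝ≥0∞) := by
    rw [setLIntegral_congr hae, lintegral_iUnion (fun k => measS _) S_disjoint]
    refine ENNReal.tsum_le_tsum fun k => ?_
    have hcongr : ∫⁻ x in S p (k:ℤ), (‖Real.log ‖x‖‖₊ : ℝ≥0∞) ∂μ
        = ∫⁻ _x in S p (k:ℤ), ((‖(k:ℝ) * Real.log p‖₊ : ℝ≥0) : ℝ≥0∞) ∂μ := by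
      refine setLIntegral_congr_fun (measS _) (fun x hx => ?_)
      have h1 := norm_eq_of_mem_S hx
      rw [h1, Real.log_zpow]
      congr 1
      rw [show ((-(k:ℤ) : ℤ) : ℝ) * Real.log p = -((k:ℝ) * Real.log p) by push_cast; ring,
        nnnorm_neg]
    rw [hcongr, setLIntegral_const, ENNReal.coe_mul, ENNReal.coe_zpow hp0]
    have hS_le : μ (S p (k:ℤ)) ≤ ((p:ℝ≥0) : ℝ≥0∞) ^ (-(k:ℤ)) := by
      rw [show (((p:ℝ≥0)) : ℝ≥0∞) = ((p:ℕ) : ℝ≥0∞) by simp, ← measure_B μ hμ1]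
      exact measure_mono Set.diff_subset
    exact mul_le_mul_right hS_le _
  have hfin : (∑' k : ℕ, ((‖(k:ℝ) * Real.log p‖₊ * (p:ℝ≥0) ^ (-(k:ℤ)) : ℝ≥0) : ℝ≥0∞)) ≠ ⊤ := by
    rw [ENNReal.tsum_coe_ne_top_iff_summable]
    rw [← NNReal.summable_coe]
    have hco : ∀ k : ℕ, ((‖(k:ℝ) * Real.log p‖₊ * (p:ℝ≥0) ^ (-(k:ℤ)) : ℝ≥0) : ℝ)
        = |((k:ℝ) * Real.log p) * ((p:ℝ)⁻¹) ^ k| := by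
      intro k
      push_cast
      rw [abs_mul, Real.norm_eq_abs]
      congr 1
      rw [abs_of_nonneg (by positivity : (0:ℝ) ≤ ((p:ℝ)⁻¹)^k), zpow_neg, zpow_natCast, ← inv_pow]
    simp only [hco]
    rw [summable_abs_iff]
    have hr : ‖(p:ℝ)⁻¹‖ < 1 := by
      rw [Real.norm_eq_abs, abs_of_nonneg (by positivity), inv_lt_one_iff₀]
      right; exact hp1
    have hs := (summable_pow_mul_geometric_of_norm_lt_one 1 hr).mul_left (Real.log p)
    refine hs.congr fun k => ?_
    simp; ring
  rw [hasFiniteIntegral_iff_norm]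
  have heqi : ∫⁻ x in B p 0, ENNReal.ofReal ‖Real.log ‖x‖‖ ∂μ
      = ∫⁻ x in B p 0, (‖Real.log ‖x‖‖₊ : ℝ≥0∞) ∂μ := by
    congr 1
    funext x
    rw [ofReal_norm, enorm_eq_nnnorm]
  rw [heqi]
  exact lt_of_le_of_lt key (lt_of_le_of_ne le_top hfin)

end ConnesAux

namespace ConnesAux

variable {p : ℕ} [Fact p.Prime] [MeasurableSpace ℚ_[p]] [BorelSpace ℚ_[p]]

lemma log_setIntegral (μ : Measure ℚ_[p]) [μ.IsAddHaarMeasure] (hμ1 : μ (B p 0) = 1) :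
    ∫ x in B p 0, Real.log ‖x‖ ∂μ = -Real.log p / ((p:ℝ) - 1) := by
  have hae : (B p 0 : Set ℚ_[p]) =ᵐ[μ] ⋃ k : ℕ, S p (k:ℤ) := by
    rw [← B0_diff]
    exact (MeasureTheory.diff_ae_eq_self.mpr (le_antisymm
      (le_trans (measure_mono Set.inter_subset_right) (measure_singleton_zero μ hμ1).le)
      (zero_le))).symm
  have hInt' : IntegrableOn (fun x : ℚ_[p] => Real.log ‖x‖) (⋃ k : ℕ, S p (k:ℤ)) μ :=
    (log_integrableOn μ hμ1).mono_set (by rw [← B0_diff]; exact Set.diff_subset)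
  rw [setIntegral_congr_set hae, integral_iUnion (fun k => measS _) S_disjoint hInt']
  set r : ℝ := (p:ℝ)⁻¹ with hrdef
  have hppos' : (0:ℝ) < p := hppos
  have hp1' : (1:ℝ) < p := hp1
  have hterm : ∀ k : ℕ, ∫ x in S p (k:ℤ), Real.log ‖x‖ ∂μ
      = (-(Real.log p) * (1 - r)) * ((k:ℝ) * r ^ k) := by
    intro k
    have hEq : Set.EqOn (fun x : ℚ_[p] => Real.log ‖x‖)
        (fun _ => ((-(k:ℤ) : ℤ):ℝ) * Real.log p) (S p (k:ℤ)) := fun x hx => by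
      simp only
      rw [norm_eq_of_mem_S hx, Real.log_zpow]
    rw [setIntegral_congr_fun (measS _) hEq, setIntegral_const, measureReal_def, measure_S_toReal μ hμ1,
      smul_eq_mul]
    have hzp : (p:ℝ)^(-(k:ℤ)) = r ^ k := by
      rw [zpow_neg, zpow_natCast, hrdef, ← inv_pow]
    have hzp1 : (p:ℝ)^(-((k:ℤ)+1)) = r ^ (k+1) := by
      rw [show -((k:ℤ)+1) = -(((k+1:ℕ)):ℤ) by push_cast; ring, zpow_neg, zpow_natCast,
        hrdef, ← inv_pow]
    rw [hzp, hzp1]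
    push_cast
    ring
  rw [tsum_congr hterm, tsum_mul_left]
  have hr : ‖r‖ < 1 := by
    rw [Real.norm_eq_abs, abs_of_nonneg (by positivity), hrdef, inv_lt_one_iff₀]
    right; exact hp1'
  rw [tsum_coe_mul_geometric_of_norm_lt_one hr]
  have h1r : (1:ℝ) - r ≠ 0 := by
    rw [hrdef]
    have : (p:ℝ)⁻¹ < 1 := by rw [inv_lt_one_iff₀]; right; exact hp1'
    linarith
  have hpne : (p:ℝ) ≠ 0 := ne_of_gt hppos'
  have hpm1 : (p:ℝ) - 1 ≠ 0 := by linarith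
  rw [hrdef] at h1r ⊢
  field_simp

end ConnesAux

open ConnesAux in
/-- Appendix II, Lemma 2 of Connes' paper (the computation `A + B = 0`): with `μ` the
additive Haar measure of `ℚ_p` normalized by `μ(ℤ_p) = 1` and `α` the standard character
(trivial on `ℤ_p`, nontrivial on `p⁻¹ℤ_p`),
`∫ log|x|_p · α(x) · (1_{ℤ_p}(x) − p⁻¹ 1_{p⁻¹ℤ_p}(x)) dμ(x) = 0`. -/
theorem padic_log_pairing_eq_zero
    (p : ℕ) [Fact p.Prime] [MeasurableSpace ℚ_[p]] [BorelSpace ℚ_[p]]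
    (μ : Measure ℚ_[p]) (hμ : μ.IsAddHaarMeasure) (hμ1 : μ {x : ℚ_[p] | ‖x‖ ≤ 1} = 1)
    (α : ℚ_[p] → ℂ) (hαadd : ∀ x y, α (x + y) = α x * α y) (hαcont : Continuous α)
    (hαnorm : ∀ x, ‖α x‖ = 1)
    (hαtriv : ∀ x : ℚ_[p], ‖x‖ ≤ 1 → α x = 1)
    (hαnontriv : ∃ x : ℚ_[p], ‖x‖ ≤ (p : ℝ) ∧ α x ≠ 1) :
    ∫ x : ℚ_[p], ((Real.log ‖x‖ : ℝ) : ℂ) * α x *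
        ((if ‖x‖ ≤ 1 then (1 : ℂ) else 0) -
          (p : ℂ)⁻¹ * (if ‖x‖ ≤ (p : ℝ) then (1 : ℂ) else 0)) ∂μ = 0 := by
  haveI := hμ
  have hp1' : (1:ℝ) < p := hp1
  have hB0eq : B p 0 = {x : ℚ_[p] | ‖x‖ ≤ 1} := by
    ext x; rw [mem_B]; norm_num
  have hμ1' : μ (B p 0) = 1 := by rw [hB0eq]; exact hμ1
  set f : ℚ_[p] → ℂ := fun x => ((Real.log ‖x‖ : ℝ) : ℂ) * α x *
      ((if ‖x‖ ≤ 1 then (1 : ℂ) else 0) -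
        (p : ℂ)⁻¹ * (if ‖x‖ ≤ (p : ℝ) then (1 : ℂ) else 0)) with hfdef
  have hBm1 : ∀ x : ℚ_[p], x ∈ B p (-1) ↔ ‖x‖ ≤ (p:ℝ) := by
    intro x; rw [mem_B]; norm_num
  have hstep0 : ∫ x, f x ∂μ = ∫ x in B p (-1), f x ∂μ := by
    rw [← integral_indicator (measB (-1))]
    congr 1
    funext x
    by_cases hx : x ∈ B p (-1)
    · rw [Set.indicator_of_mem hx]
    · rw [Set.indicator_of_notMem hx]
      have h1 : ¬ ‖x‖ ≤ (p:ℝ) := fun hc => hx ((hBm1 x).2 hc)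
      have h2 : ¬ ‖x‖ ≤ 1 := fun hc => h1 (le_trans hc (le_of_lt hp1'))
      simp [hfdef, h1, h2]
  have hintlog : IntegrableOn (fun x : ℚ_[p] => ((Real.log ‖x‖ : ℝ) : ℂ)) (B p 0) μ :=
    (log_integrableOn μ hμ1').ofReal
  have hEqB0 : Set.EqOn f (fun x => ((1:ℂ) - (p:ℂ)⁻¹) * ((Real.log ‖x‖ : ℝ):ℂ)) (B p 0) := by
    intro x hx
    have h1 : ‖x‖ ≤ 1 := by rw [mem_B] at hx; simpa using hx
    have h2 : ‖x‖ ≤ (p:ℝ) := le_trans h1 (le_of_lt hp1')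
    have hα1 : α x = 1 := hαtriv x h1
    simp only [hfdef, h1, h2, hα1, if_pos]
    ring
  have hintB0 : IntegrableOn f (B p 0) μ :=
    IntegrableOn.congr_fun (hintlog.const_mul ((1:ℂ) - (p:ℂ)⁻¹)) hEqB0.symm (measB 0)
  have hSnorm : ∀ x ∈ S p (-1), ‖x‖ = (p:ℝ) := by
    intro x hx
    have h := norm_eq_of_mem_S hx
    rw [h]; norm_num
  have hEqS : Set.EqOn f (fun x => (-(p:ℂ)⁻¹ * ((Real.log p : ℝ):ℂ)) * α x) (S p (-1)) := by
    intro x hx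
    have h1 : ‖x‖ = (p:ℝ) := hSnorm x hx
    have h2 : ¬ ‖x‖ ≤ 1 := by rw [h1]; linarith
    have h3 : ‖x‖ ≤ (p:ℝ) := le_of_eq h1
    simp only [hfdef, h1, if_neg h2, if_pos h3]
    rw [if_neg (not_le.2 hp1'), if_pos le_rfl]
    ring
  have hintα : ∀ s : Set ℚ_[p], MeasurableSet s → s ⊆ B p (-1) → IntegrableOn α s μ := by
    intro s hs hsub
    refine Measure.integrableOn_of_bounded
      (ne_top_of_le_ne_top (measure_B_ne_top μ (-1)) (measure_mono hsub))
      hαcont.measurable.aestronglyMeasurable (M := 1) ?_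
    exact ae_of_all _ (fun x => le_of_eq (hαnorm x))
  have hintS : IntegrableOn f (S p (-1)) μ :=
    IntegrableOn.congr_fun
      ((hintα _ (measS _) Set.diff_subset).const_mul (-(p:ℂ)⁻¹ * ((Real.log p : ℝ):ℂ)))
      hEqS.symm (measS (-1))
  have hsubB0 : B p 0 ⊆ B p (-1) := by
    intro x hx
    rw [mem_B] at hx ⊢
    exact le_trans hx (zpow_le_zpow_right₀ (le_of_lt hp1) (by omega))
  have hSm1 : S p (-1) = B p (-1) \ B p 0 := by
    have h0 : (-1:ℤ) + 1 = 0 := by norm_num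
    rw [S, h0]
  have hBeq : B p (-1) = B p 0 ∪ S p (-1) := by
    rw [hSm1, Set.union_diff_cancel hsubB0]
  have hdisj : Disjoint (B p 0) (S p (-1)) := by
    rw [hSm1]; exact Set.disjoint_sdiff_right
  have hα0 : ∫ x in B p 0, α x ∂μ = 1 := by
    rw [setIntegral_congr_fun (measB 0)
      (fun x hx => hαtriv x (by rw [mem_B] at hx; simpa using hx)), setIntegral_const, measureReal_def, hμ1']
    simp
  have hαm1 : ∫ x in B p (-1), α x ∂μ = 0 := by
    obtain ⟨y, hy1, hy2⟩ := hαnontriv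
    exact char_setIntegral_eq_zero μ α hαadd (-1) y ((hBm1 y).2 hy1) hy2
  have hαS : ∫ x in S p (-1), α x ∂μ = -1 := by
    have hu := setIntegral_union hdisj (measS (-1)) (hintα _ (measB 0) hsubB0)
      (hintα _ (measS (-1)) Set.diff_subset) (f := α)
    rw [← hBeq, hαm1, hα0] at hu
    linear_combination -hu
  rw [hstep0, hBeq, setIntegral_union hdisj (measS (-1)) hintB0 hintS,
    setIntegral_congr_fun (measB 0) hEqB0, setIntegral_congr_fun (measS (-1)) hEqS,
    integral_const_mul, integral_const_mul, hαS]
  have hL : ∫ x in B p 0, ((Real.log ‖x‖ : ℝ):ℂ) ∂μ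
      = ((-Real.log p / ((p:ℝ)-1) : ℝ) : ℂ) := by
    rw [← log_setIntegral μ hμ1']
    exact integral_ofReal
  rw [hL]
  have hpC : (p:ℂ) ≠ 0 := by
    exact_mod_cast Nat.cast_ne_zero.2 (Fact.out : p.Prime).ne_zero
  have hpC1 : (p:ℂ) - 1 ≠ 0 := by
    rw [sub_ne_zero]
    exact_mod_cast Nat.cast_injective.ne (Fact.out : p.Prime).ne_one
  push_cast
  field_simp
  ring
end

section
/- Fix z ∈ ℂ with z ≠ 0 and |z| ≠ 1. For N ∈ ℕ let η_N ∈ ℓ²(ℤ) be the unit vector η_N(n) = c_N · (conj z)^n for |n| ≤ N and η_N(n) = 0 otherwise, where c_N = ( (|z| − |z|⁻¹) / (|z|^{2N+1} − |z|^{−(2N+1)}) )^{1/2}. Let V be the bilateral shift (Vξ)(n) = ξ(n−1), and for finitely supported f: ℤ → ℂ set V(f) = ∑_k f(k) V^k. Then lim_{N→∞} ⟨V(f) η_N, η_N⟩ = (1/2π) ∫₀^{2π} P_z(e^{iθ}) f̂(e^{iθ}) dθ, where f̂(u) = ∑_k f(k) u^k and P_z(u) = |1 − |z|²| / |u − z|².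 -/
open Filter Topology Complex

/-- The unit vectors `η_N ∈ ℓ²(ℤ)`, `η_N(n) = c_N (z̄)ⁿ` for `|n| ≤ N` and `0` otherwise,
with `c_N = ((|z| − |z|⁻¹)/(|z|^{2N+1} − |z|^{−(2N+1)}))^{1/2}`. -/
noncomputable def etaVec (z : ℂ) (N : ℕ) (n : ℤ) : ℂ :=
  if |n| ≤ (N : ℤ) then
    ((Real.sqrt ((‖z‖ - ‖z‖⁻¹) /
        (‖z‖ ^ (2 * (N : ℤ) + 1) - ‖z‖ ^ (-(2 * (N : ℤ) + 1))))) : ℂ) *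
      (starRingEnd ℂ z) ^ n
  else 0

/-- `f̂(u) = ∑_k f(k) uᵏ` for a finitely supported `f : ℤ → ℂ`. -/
noncomputable def symbolHat (f : ℤ → ℂ) (u : ℂ) : ℂ := ∑' k : ℤ, f k * u ^ k

lemma Int.Icc_succ_right' (a b : ℤ) (h : a ≤ b + 1) :
    Finset.Icc a (b+1) = insert (b+1) (Finset.Icc a b) := by
  ext n; simp only [Finset.mem_Icc, Finset.mem_insert]; omega

lemma sum_zpow_Icc (x : ℂ) (hx : x ≠ 0) (a : ℤ) (m : ℕ) :
    ∑ n ∈ Finset.Icc a (a + (m : ℤ)), x ^ n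
      = x ^ a * ∑ i ∈ Finset.range (m+1), x ^ i := by
  induction m with
  | zero => simp
  | succ m ih =>
      have h1 : a + ((m : ℤ) + 1) = (a + (m : ℤ)) + 1 := by ring
      have h2 : (a + (m:ℤ)) + 1 ∉ Finset.Icc a (a + (m:ℤ)) := by
        simp only [Finset.mem_Icc]; omega
      push_cast
      rw [h1, Int.Icc_succ_right' _ _ (by omega), Finset.sum_insert h2, ih]
      have h3 : ∑ i ∈ Finset.range (m+1+1), x^i
          = ∑ i ∈ Finset.range (m+1), x^i + x^(m+1) := Finset.sum_range_succ _ _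
      rw [h3]
      have h4 : x ^ (a + (m:ℤ) + 1) = x ^ a * x ^ (m+1) := by
        rw [show a + (m:ℤ) + 1 = a + ((m+1 : ℕ) : ℤ) by push_cast; ring,
          zpow_add₀ hx a ((m+1 : ℕ) : ℤ), zpow_natCast]
      rw [h4]; ring

lemma key_id (r c t : ℝ) (hr : r ≠ 0) (N : ℕ) (h1 : r^2 - 1 ≠ 0)
    (h2 : (r^2)^(2*N+1) - 1 ≠ 0) :
    (r - r⁻¹)/(r^(2*N+1) - (r^(2*N+1))⁻¹) * (t * ((r^2)^N)⁻¹) * (c/(r^2-1))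
      = t * (c/((r^2)^(2*N+1) - 1)) := by
  have hrp : r^(2*N+1) ≠ 0 := pow_ne_zero _ hr
  have e : r^(2*N+1) - (r^(2*N+1))⁻¹ = ((r^2)^(2*N+1) - 1)/r^(2*N+1) := by
    rw [← pow_mul]
    field_simp
    ring
  rw [e]
  field_simp
  ring

lemma pow_ne_one_of_ne_one {r : ℝ} (hr0 : 0 < r) (hr1 : r ≠ 1) {j : ℕ} (hj : j ≠ 0) :
    r ^ j ≠ 1 := by
  rcases lt_or_gt_of_ne hr1 with h | h
  · exact ne_of_lt (pow_lt_one₀ hr0.le h hj)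
  · exact ne_of_gt (one_lt_pow₀ h hj)

lemma tsum_eta (z : ℂ) (hz : z ≠ 0) (hz1 : ‖z‖ ≠ 1) (k : ℤ) (N : ℕ)
    (hN : k.natAbs ≤ N) :
    ∑' n : ℤ, etaVec z N (n - k) * (starRingEnd ℂ) (etaVec z N n)
      = ((starRingEnd ℂ) z) ^ (-k) *
        ((((‖z‖^2)^(k.toNat) *
            (((‖z‖^2)^(2*N+1-k.natAbs) - 1) / ((‖z‖^2)^(2*N+1) - 1)) : ℝ)) : ℂ) := by
  have hr0 : 0 < ‖z‖ := norm_pos_iff.mpr hz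
  set r := ‖z‖ with hrdef
  have hzc : (starRingEnd ℂ) z ≠ 0 := by simpa using hz
  have hM : (2 * (N:ℤ) + 1) = ((2*N+1 : ℕ) : ℤ) := by push_cast; ring
  have hz2 : r ^ (2 * (N:ℤ) + 1) = r ^ (2*N+1 : ℕ) := by rw [hM, zpow_natCast]
  have hz3 : r ^ (-(2 * (N:ℤ) + 1)) = (r ^ (2*N+1 : ℕ))⁻¹ := by
    rw [zpow_neg, hz2]
  set q : ℝ := (r - r⁻¹) / (r ^ (2 * (N:ℤ) + 1) - r ^ (-(2 * (N:ℤ) + 1))) with hq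
  have hq' : q = (r - r⁻¹) / (r ^ (2*N+1 : ℕ) - (r ^ (2*N+1 : ℕ))⁻¹) := by
    rw [hq, hz2, hz3]
  have hq0 : 0 ≤ q := by
    rw [hq']
    have hu0 : 0 < r ^ (2*N+1 : ℕ) := pow_pos hr0 _
    have hi : r * r⁻¹ = 1 := mul_inv_cancel₀ hr0.ne'
    have hui : r ^ (2*N+1:ℕ) * (r ^ (2*N+1:ℕ))⁻¹ = 1 := mul_inv_cancel₀ hu0.ne'
    rcases lt_or_gt_of_ne hz1 with h | h
    · have hu1 : r ^ (2*N+1:ℕ) < 1 := pow_lt_one₀ hr0.le h (by omega)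
      rw [div_nonneg_iff]
      right
      constructor <;> nlinarith
    · have hu1 : 1 < r ^ (2*N+1:ℕ) := one_lt_pow₀ h (by omega)
      apply div_nonneg
      · nlinarith
      · nlinarith
  set a : ℤ := -(N:ℤ) + max k 0 with ha
  set b : ℤ := (N:ℤ) + min k 0 with hb
  have habs : ∀ n : ℤ, (|n| ≤ (N:ℤ) ↔ n.natAbs ≤ N) := by
    intro n; rw [Int.abs_eq_natAbs]; omega
  have hstep1 : ∑' n : ℤ, etaVec z N (n - k) * (starRingEnd ℂ) (etaVec z N n)
      = ∑ n ∈ Finset.Icc a b, etaVec z N (n - k) * (starRingEnd ℂ) (etaVec z N n) := by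
    apply tsum_eq_sum
    intro n hn
    rw [Finset.mem_Icc] at hn
    by_cases h1 : |n| ≤ (N:ℤ)
    · have h2 : ¬ |n - k| ≤ (N:ℤ) := by
        rw [habs] at h1 ⊢
        omega
      simp [etaVec, h2]
    · simp [etaVec, h1]
  rw [hstep1]
  set y : ℂ := (((r^2 : ℝ)) : ℂ) with hy
  have hy_eq : y = (starRingEnd ℂ) z * z := by
    rw [hy, mul_comm, Complex.mul_conj, ← Complex.sq_norm]
  have hy0 : y ≠ 0 := by
    rw [hy]
    simp only [ne_eq, Complex.ofReal_eq_zero]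
    positivity
  have hρ1 : (r^2 : ℝ) ≠ 1 := pow_ne_one_of_ne_one hr0 hz1 (by omega)
  have hy1 : y ≠ 1 := by
    rw [hy]; exact_mod_cast hρ1
  have hterm : ∀ n ∈ Finset.Icc a b,
      etaVec z N (n - k) * (starRingEnd ℂ) (etaVec z N n)
        = (q : ℂ) * (((starRingEnd ℂ) z) ^ (-k) * y ^ n) := by
    intro n hn
    rw [Finset.mem_Icc] at hn
    have h1 : |n| ≤ (N:ℤ) := by rw [habs]; omega
    have h2 : |n - k| ≤ (N:ℤ) := by rw [habs]; omega
    simp only [etaVec, if_pos h1, if_pos h2]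
    rw [← hrdef, ← hq]
    rw [map_mul, Complex.conj_ofReal, map_zpow₀, Complex.conj_conj]
    have hsq : ((Real.sqrt q : ℝ) : ℂ) * ((Real.sqrt q : ℝ) : ℂ) = (q : ℂ) := by
      rw [← Complex.ofReal_mul, Real.mul_self_sqrt hq0]
    rw [hy_eq, mul_zpow, zpow_sub₀ hzc, zpow_neg, ← hsq]
    ring
  rw [Finset.sum_congr rfl hterm, ← Finset.mul_sum, ← Finset.mul_sum]
  have hN2 : k.natAbs ≤ 2*N := by omega
  have hab : b = a + ((2*N - k.natAbs : ℕ) : ℤ) := by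
    rw [ha, hb]
    omega
  rw [hab, sum_zpow_Icc y hy0 a _, geom_sum_eq hy1]
  have hme : (2*N - k.natAbs) + 1 = 2*N+1-k.natAbs := by omega
  rw [hme]
  have hρa : y ^ a = ((((r^2 : ℝ) ^ a : ℝ)) : ℂ) := by
    rw [hy, Complex.ofReal_zpow]
  have hreal : q * ((r^2:ℝ) ^ a) * (((r^2)^(2*N+1-k.natAbs) - 1) / ((r^2) - 1))
      = (r^2)^(k.toNat) * (((r^2)^(2*N+1-k.natAbs) - 1) / ((r^2)^(2*N+1) - 1)) := by
    have haa : (r^2:ℝ) ^ a = (r^2)^(k.toNat) * (((r^2)^N)⁻¹) := by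
      rw [show a = (k.toNat : ℤ) + (-(N:ℤ)) by rw [ha, Int.toNat_eq_max]; ring,
        zpow_add₀ (by positivity : (r^2:ℝ) ≠ 0), zpow_neg, zpow_natCast, zpow_natCast]
    rw [hq', haa]
    have h1 : (r^2 : ℝ) - 1 ≠ 0 := sub_ne_zero.mpr hρ1
    have h2 : ((r^2 : ℝ))^(2*N+1) - 1 ≠ 0 :=
      sub_ne_zero.mpr (by rw [← pow_mul]; exact pow_ne_one_of_ne_one hr0 hz1 (by omega))
    linear_combination key_id r ((r^2)^(2*N+1-k.natAbs) - 1) ((r^2)^(k.toNat)) hr0.ne' N h1 h2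
  rw [hρa, ← hreal]
  simp only [hy]
  push_cast
  ring


noncomputable def wpt (z : ℂ) : ℂ := if ‖z‖ < 1 then z else ((starRingEnd ℂ) z)⁻¹

noncomputable def mlim (z : ℂ) (k : ℤ) : ℂ :=
  if 0 ≤ k then (wpt z) ^ k else ((starRingEnd ℂ) (wpt z)) ^ (-k)

lemma div_sub_one_aux (T c : ℝ) (hT : T ≠ 0) (hc : c ≠ 0) :
    (T/c - 1)/(T - 1) = (c⁻¹ - T⁻¹)/(1 - T⁻¹) := by
  rcases eq_or_ne T 1 with h | h
  · subst h; simp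
  · have h1 : T - 1 ≠ 0 := sub_ne_zero.mpr h
    have h2 : 1 - T⁻¹ ≠ 0 :=
      sub_ne_zero.mpr (fun e => h (by rwa [eq_comm, inv_eq_one] at e))
    field_simp

lemma realSeq_tendsto (z : ℂ) (hz1 : ‖z‖ ≠ 1) (k : ℤ)
    (hr0 : (0:ℝ) < ‖z‖) :
    Tendsto (fun N : ℕ => (‖z‖^2)^(k.toNat) *
        (((‖z‖^2)^(2*N+1-k.natAbs) - 1) / ((‖z‖^2)^(2*N+1) - 1)))
      atTop
      (𝓝 (if ‖z‖ < 1 then (‖z‖^2)^(k.toNat)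
          else (‖z‖^2)^(k.toNat) * ((‖z‖^2)^(k.natAbs))⁻¹)) := by
  set r := ‖z‖ with hrdef
  set ρ : ℝ := r^2 with hρ
  have hρ0 : (0:ℝ) < ρ := by positivity
  have hpow : ∀ N : ℕ, k.natAbs ≤ N → ρ^(2*N+1-k.natAbs) = (ρ^2)^N * ρ / ρ^(k.natAbs) := by
    intro N hN
    rw [pow_sub₀ _ hρ0.ne' (by omega), ← pow_mul]
    rw [hρ]; ring
  have hpow2 : ∀ N : ℕ, ρ^(2*N+1) = (ρ^2)^N * ρ := by
    intro N; rw [← pow_mul]; rw [hρ]; ring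
  rcases lt_or_gt_of_ne hz1 with hlt | hgt
  · have hρlt : ρ < 1 := by nlinarith
    have ht : Tendsto (fun N:ℕ => (ρ^2)^N * ρ) atTop (𝓝 0) := by
      have h2 := tendsto_pow_atTop_nhds_zero_of_norm_lt_one
        (x := ρ^2) (by rw [Real.norm_eq_abs, abs_of_pos (by positivity)]; nlinarith)
      simpa using h2.mul_const ρ
    have hmain := Tendsto.const_mul (ρ^(k.toNat))
      (((ht.div_const (ρ^(k.natAbs))).sub_const 1).div (ht.sub_const 1) (by norm_num))
    rw [if_pos hlt]
    have hval : ρ^(k.toNat) * ((0/ρ^(k.natAbs) - 1)/(0-1)) = ρ^(k.toNat) := by norm_num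
    rw [hval] at hmain
    apply hmain.congr'
    filter_upwards [eventually_ge_atTop k.natAbs] with N hN
    simp only [Pi.div_apply]
    rw [hpow N hN, hpow2 N]
  · have hρgt : 1 < ρ := by nlinarith
    have ht : Tendsto (fun N:ℕ => (((ρ^2)^N * ρ)⁻¹)) atTop (𝓝 0) := by
      have h2 := tendsto_pow_atTop_nhds_zero_of_norm_lt_one
        (x := (ρ^2)⁻¹) (by rw [Real.norm_eq_abs, abs_of_pos (by positivity)]
                           rw [inv_lt_one_iff₀]; right; nlinarith)
      have h3 := h2.mul_const ρ⁻¹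
      rw [zero_mul] at h3
      apply h3.congr
      intro N
      simp [mul_inv, ← inv_pow, mul_comm]
    have hmain := Tendsto.const_mul (ρ^(k.toNat))
      (((tendsto_const_nhds (x := (ρ^(k.natAbs))⁻¹)).sub ht).div
        ((tendsto_const_nhds (x := (1:ℝ))).sub ht) (by norm_num))
    rw [if_neg (by push_neg; nlinarith)]
    have hval : ρ^(k.toNat) * (((ρ^(k.natAbs))⁻¹ - 0)/(1-0)) = ρ^(k.toNat) * (ρ^(k.natAbs))⁻¹ := by
      norm_num
    rw [hval] at hmain
    apply hmain.congr'
    filter_upwards [eventually_ge_atTop k.natAbs] with N hN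
    have htN0 : (ρ^2)^N * ρ ≠ 0 := by positivity
    simp only [Pi.div_apply]
    rw [hpow N hN, hpow2 N, div_sub_one_aux _ _ htN0 (by positivity)]

lemma mlim_eq (z : ℂ) (hz : z ≠ 0) (hz1 : ‖z‖ ≠ 1) (k : ℤ) :
    ((starRingEnd ℂ) z) ^ (-k) *
      (((if ‖z‖ < 1 then (‖z‖^2)^(k.toNat)
          else (‖z‖^2)^(k.toNat) * ((‖z‖^2)^(k.natAbs))⁻¹ : ℝ)) : ℂ)
      = mlim z k := by
  have hzc : (starRingEnd ℂ) z ≠ 0 := by simpa using hz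
  have hr0 : (0:ℝ) < ‖z‖ := norm_pos_iff.mpr hz
  have hy_eq : ((‖z‖^2 : ℝ) : ℂ) = (starRingEnd ℂ) z * z := by
    rw [mul_comm, Complex.mul_conj, ← Complex.sq_norm]
  by_cases hk : 0 ≤ k <;> by_cases hlt : ‖z‖ < 1
  · simp only [mlim, wpt, if_pos hlt, if_pos hk]
    rw [Complex.ofReal_pow, hy_eq, ← zpow_natCast, Int.toNat_of_nonneg hk,
      mul_zpow, zpow_neg, inv_mul_cancel_left₀ (zpow_ne_zero _ hzc)]
  · simp only [mlim, wpt, if_neg hlt, if_pos hk]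
    have hna : k.natAbs = k.toNat := by omega
    rw [hna, mul_inv_cancel₀ (pow_ne_zero _ (by positivity : (‖z‖^2 : ℝ) ≠ 0))]
    rw [Complex.ofReal_one, mul_one, zpow_neg, inv_zpow]
  · simp only [mlim, wpt, if_pos hlt, if_neg hk]
    have ht : k.toNat = 0 := by omega
    rw [ht, pow_zero, Complex.ofReal_one, mul_one]
  · simp only [mlim, wpt, if_neg hlt, if_neg hk]
    have ht : k.toNat = 0 := by omega
    rw [ht, pow_zero, one_mul, map_inv₀, Complex.conj_conj]
    rw [Complex.ofReal_inv, Complex.ofReal_pow, hy_eq, ← zpow_natCast, ← zpow_neg,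
      show -((k.natAbs : ℕ) : ℤ) = k by omega]
    rw [mul_zpow, zpow_neg (starRingEnd ℂ z) k, inv_mul_cancel_left₀ (zpow_ne_zero _ hzc)]
    rw [inv_zpow, zpow_neg, inv_inv]


lemma lemA (z : ℂ) (hz : z ≠ 0) (hz1 : ‖z‖ ≠ 1) (k : ℤ) :
    Tendsto (fun N : ℕ => ∑' n : ℤ, etaVec z N (n - k) * (starRingEnd ℂ) (etaVec z N n))
      atTop (𝓝 (mlim z k)) := by
  have h1 := realSeq_tendsto z hz1 k (norm_pos_iff.mpr hz)
  have h2 := Tendsto.const_mul (((starRingEnd ℂ) z) ^ (-k))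
    ((Complex.continuous_ofReal.tendsto _).comp h1)
  rw [mlim_eq z hz hz1 k] at h2
  apply h2.congr'
  filter_upwards [eventually_ge_atTop k.natAbs] with N hN
  exact (tsum_eta z hz hz1 k N hN).symm

lemma wpt_abs_lt (z : ℂ) (hz : z ≠ 0) (hz1 : ‖z‖ ≠ 1) : ‖wpt z‖ < 1 := by
  rw [wpt]
  rcases lt_or_gt_of_ne hz1 with h | h
  · rw [if_pos h]; exact h
  · rw [if_neg (by push_neg; linarith)]
    rw [norm_inv, Complex.norm_conj]
    rw [inv_lt_one_iff₀]; right; exact h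

lemma wpt_ne_zero (z : ℂ) (hz : z ≠ 0) : wpt z ≠ 0 := by
  rw [wpt]
  split
  · exact hz
  · simp [hz]

lemma poisson_pt (z : ℂ) (hz : z ≠ 0) (hz1 : ‖z‖ ≠ 1) (θ : ℝ) :
    ((|1 - ‖z‖^2| / ‖Complex.exp (θ*Complex.I) - z‖^2 : ℝ) : ℂ)
      = ((1 - ‖wpt z‖^2 : ℝ) : ℂ) * Complex.exp (θ*Complex.I) *
        ((Complex.exp (θ*Complex.I) - wpt z) *
          (1 - (starRingEnd ℂ) (wpt z) * Complex.exp (θ*Complex.I)))⁻¹ := by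
  set u : ℂ := Complex.exp (θ*Complex.I) with hu_def
  have hu : ‖u‖ = 1 := Complex.norm_exp_ofReal_mul_I θ
  have hu0 : u ≠ 0 := by
    intro h; rw [h] at hu; simp at hu
  have hucu : (starRingEnd ℂ) u * u = 1 := by
    rw [← Complex.normSq_eq_conj_mul_self]
    rw [← Complex.sq_norm, hu]; norm_num
  have huc : (starRingEnd ℂ) u = u⁻¹ := eq_inv_of_mul_eq_one_left hucu
  have hzc : (starRingEnd ℂ) z ≠ 0 := by simpa using hz
  have huz : u - z ≠ 0 := by
    rw [sub_ne_zero]; intro e; rw [← e, hu] at hz1; exact hz1 rfl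
  have h1z : 1 - (starRingEnd ℂ) z * u ≠ 0 := by
    rw [sub_ne_zero]; intro e
    have := congrArg (‖·‖) e
    rw [norm_one, norm_mul, Complex.norm_conj, hu, mul_one] at this
    exact hz1 this.symm
  have habs2 : ((‖u - z‖^2 : ℝ) : ℂ) = (u - z) * ((starRingEnd ℂ) u - (starRingEnd ℂ) z) := by
    rw [Complex.sq_norm, ← map_sub, Complex.mul_conj]
  rcases lt_or_gt_of_ne hz1 with h | h
  · have hw : wpt z = z := by rw [wpt, if_pos h]
    rw [hw]
    rw [Complex.ofReal_div, habs2, huc]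
    rw [_root_.abs_of_nonneg (by nlinarith [norm_nonneg z] : (0:ℝ) ≤ 1 - ‖z‖^2)]
    have hinvz : u⁻¹ - (starRingEnd ℂ) z ≠ 0 := by
      intro e
      apply h1z
      have : u * (u⁻¹ - (starRingEnd ℂ) z) = 0 := by rw [e, mul_zero]
      rw [mul_sub, mul_inv_cancel₀ hu0] at this
      rw [← this]; ring
    have hS : ((‖z‖ : ℝ) : ℂ)^2 = z * (starRingEnd ℂ) z := by
      rw [← Complex.ofReal_pow, Complex.sq_norm, Complex.mul_conj]
    have e3 : u⁻¹ - (starRingEnd ℂ) z = u⁻¹ * (1 - (starRingEnd ℂ) z * u) := by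
      field_simp [mul_comm]
    push_cast
    rw [hS, e3]
    field_simp
  · have hw : wpt z = ((starRingEnd ℂ) z)⁻¹ := by
      rw [wpt, if_neg (by push_neg; linarith)]
    have hwabs : ‖wpt z‖ = (‖z‖)⁻¹ := by
      rw [hw, norm_inv, Complex.norm_conj]
    have hcw : (starRingEnd ℂ) (wpt z) = z⁻¹ := by
      rw [hw, map_inv₀, Complex.conj_conj]
    have hr0 : (0:ℝ) < ‖z‖ := norm_pos_iff.mpr hz
    have habs1 : (|1 - ‖z‖^2| : ℝ) = ‖z‖^2 - 1 := by
      rw [_root_.abs_of_nonpos (by nlinarith)]; ring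
    have h2 : (1 - ‖wpt z‖^2 : ℝ) = (‖z‖^2 - 1)/(‖z‖^2) := by
      rw [hwabs]
      field_simp
    have hS : ((‖z‖^2 : ℝ) : ℂ) = z * (starRingEnd ℂ) z := by
      rw [Complex.sq_norm, Complex.mul_conj]
    have hwz : u - wpt z ≠ 0 := by
      rw [hw, sub_ne_zero]; intro e
      have h3 := congrArg (‖·‖) e
      rw [hu, norm_inv, Complex.norm_conj] at h3
      have h4 : (‖z‖)⁻¹ = 1 := h3.symm
      rw [inv_eq_one] at h4
      exact hz1 h4
    have h1w : 1 - (starRingEnd ℂ) (wpt z) * u ≠ 0 := by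
      rw [hcw, sub_ne_zero]; intro e
      have := congrArg (‖·‖) e
      rw [norm_one, norm_mul, norm_inv, hu, mul_one] at this
      have : ‖z‖ = 1 := by
        field_simp at this
        linarith [this]
      exact hz1 this
    have hinvz : u⁻¹ - (starRingEnd ℂ) z ≠ 0 := by
      intro e
      have h0 : u * (u⁻¹ - (starRingEnd ℂ) z) = 0 := by rw [e, mul_zero]
      rw [mul_sub, mul_inv_cancel₀ hu0] at h0
      have : (starRingEnd ℂ) z * u = 1 := by
        have := sub_eq_zero.mp h0
        rw [mul_comm]; exact this.symm
      have h1 := congrArg (‖·‖) this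
      rw [norm_mul, Complex.norm_conj, hu, mul_one, norm_one] at h1
      exact hz1 h1
    have hS2 : ((‖z‖ : ℝ) : ℂ)^2 = z * (starRingEnd ℂ) z := by
      rw [← Complex.ofReal_pow, Complex.sq_norm, Complex.mul_conj]
    have e3 : u⁻¹ - (starRingEnd ℂ) z = u⁻¹ * (1 - (starRingEnd ℂ) z * u) := by
      field_simp [mul_comm]
    have e1 : u - ((starRingEnd ℂ) z)⁻¹ = ((starRingEnd ℂ) z)⁻¹ * ((starRingEnd ℂ) z * u - 1) := by
      field_simp [mul_comm]
    have e2 : 1 - z⁻¹ * u = z⁻¹ * (z - u) := by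
      field_simp
    have h1z' : (starRingEnd ℂ) z * u - 1 ≠ 0 := by
      intro e; apply h1z; rw [sub_eq_zero] at e ⊢; exact e.symm
    have hzu : z - u ≠ 0 := by
      intro e; apply huz; rw [sub_eq_zero] at e ⊢; exact e.symm
    rw [Complex.ofReal_div, habs2, huc, habs1, h2, hcw, hw]
    push_cast
    rw [hS2, e3, e1, e2]
    field_simp
    ring


lemma circle_int (w : ℂ) (hw : ‖w‖ < 1) (j : ℕ) :
    ∫ θ in (0:ℝ)..(2*Real.pi), ((1 - ‖w‖^2 : ℝ) : ℂ) * Complex.exp (θ*Complex.I) *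
        ((Complex.exp (θ*Complex.I) - w) * (1 - (starRingEnd ℂ) w * Complex.exp (θ*Complex.I)))⁻¹ *
        (Complex.exp (θ*Complex.I))^j
      = ((2*Real.pi : ℝ) : ℂ) * w^j := by
  set A : ℂ := ((1 - ‖w‖^2 : ℝ) : ℂ) with hA
  have hA0 : A ≠ 0 := Complex.ofReal_ne_zero.mpr (by nlinarith [norm_nonneg w])
  set g : ℂ → ℂ := fun v => A * v^j * Complex.I⁻¹ * (1 - (starRingEnd ℂ) w * v)⁻¹ with hg
  have hnz : ∀ v : ℂ, ‖v‖ ≤ 1 → 1 - (starRingEnd ℂ) w * v ≠ 0 := by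
    intro v hv e
    rw [sub_eq_zero] at e
    have h2 := congrArg (‖·‖) e
    rw [norm_one, norm_mul, Complex.norm_conj] at h2
    nlinarith [norm_nonneg v, norm_nonneg w]
  have hdiff : DiffContOnCl ℂ g (Metric.ball 0 1) := by
    apply DifferentiableOn.diffContOnCl
    rw [closure_ball (0:ℂ) one_ne_zero]
    apply DifferentiableOn.mul
    · exact (((differentiable_const A).mul (differentiable_pow j)).mul
        (differentiable_const _)).differentiableOn
    · apply DifferentiableOn.inv
      · exact ((differentiable_const (1:ℂ)).sub
          ((differentiable_const _).mul differentiable_id)).differentiableOn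
      · intro v hv
        exact hnz v (by simpa [Metric.mem_closedBall, Complex.dist_eq] using hv)
  have hwmem : w ∈ Metric.ball (0:ℂ) 1 := by
    simpa [Metric.mem_ball, Complex.dist_eq] using hw
  have hCI := hdiff.circleIntegral_sub_inv_smul hwmem
  rw [circleIntegral] at hCI
  simp only [deriv_circleMap, smul_eq_mul] at hCI
  have hcm : ∀ θ : ℝ, circleMap 0 1 θ = Complex.exp (θ*Complex.I) := by
    intro θ; simp [circleMap]
  have hint : ∀ θ : ℝ,
      A * Complex.exp (θ*Complex.I) *
        ((Complex.exp (θ*Complex.I) - w) * (1 - (starRingEnd ℂ) w * Complex.exp (θ*Complex.I)))⁻¹ *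
        (Complex.exp (θ*Complex.I))^j
      = circleMap 0 1 θ * Complex.I *
          ((circleMap 0 1 θ - w)⁻¹ * g (circleMap 0 1 θ)) := by
    intro θ
    rw [hcm θ]
    set u : ℂ := Complex.exp (θ*Complex.I) with hu_def
    have hu : ‖u‖ = 1 := Complex.norm_exp_ofReal_mul_I θ
    have hu0 : u ≠ 0 := by intro e; rw [e] at hu; simp at hu
    have huw : u - w ≠ 0 := by
      rw [sub_ne_zero]; intro e; rw [← e, hu] at hw; linarith
    have h1w : 1 - (starRingEnd ℂ) w * u ≠ 0 := hnz u (le_of_eq hu)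
    simp only [hg]
    rw [mul_inv]
    field_simp
  have hIeq : (∫ θ in (0:ℝ)..(2*Real.pi),
      A * Complex.exp (θ*Complex.I) *
        ((Complex.exp (θ*Complex.I) - w) * (1 - (starRingEnd ℂ) w * Complex.exp (θ*Complex.I)))⁻¹ *
        (Complex.exp (θ*Complex.I))^j)
      = ∫ θ in (0:ℝ)..(2*Real.pi), circleMap 0 1 θ * Complex.I *
          ((circleMap 0 1 θ - w)⁻¹ * g (circleMap 0 1 θ)) := by
    apply intervalIntegral.integral_congr
    intro θ _
    exact hint θ
  rw [hIeq, hCI]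
  have hww : (starRingEnd ℂ) w * w = ((‖w‖^2 : ℝ) : ℂ) := by
    rw [← Complex.normSq_eq_conj_mul_self, Complex.sq_norm]
  simp only [hg]
  rw [hww]
  have hA' : (1 : ℂ) - ((‖w‖^2 : ℝ) : ℂ) = A := by
    rw [hA]; push_cast; ring
  rw [hA']
  field_simp [Complex.I_ne_zero]
  push_cast
  ring

lemma intervalIntegral_conj (f : ℝ → ℂ) (a b : ℝ) :
    (∫ θ in a..b, (starRingEnd ℂ) (f θ)) = (starRingEnd ℂ) (∫ θ in a..b, f θ) := by
  have h := integral_conj (μ := MeasureTheory.volume.restrict (Set.uIoc a b)) (f := f)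
  rcases le_or_gt a b with hab | hab
  · simp only [Set.uIoc_of_le hab] at h
    simp [intervalIntegral.intervalIntegral_eq_integral_uIoc, hab, h]
  · have hnle : ¬ a ≤ b := not_le.mpr hab
    simp only [Set.uIoc_of_ge hab.le] at h
    simp [intervalIntegral.intervalIntegral_eq_integral_uIoc, hnle, Set.uIoc_of_ge hab.le, h]

lemma intB_nonneg (z : ℂ) (hz : z ≠ 0) (hz1 : ‖z‖ ≠ 1) (k : ℤ) (hk : 0 ≤ k) :
    (∫ θ in (0:ℝ)..(2*Real.pi),
        ((|1 - ‖z‖^2| / ‖Complex.exp (θ*Complex.I) - z‖^2 : ℝ) : ℂ) *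
          (Complex.exp (θ*Complex.I))^k)
      = ((2*Real.pi : ℝ) : ℂ) * mlim z k := by
  have hw := wpt_abs_lt z hz hz1
  have heq : ∀ θ : ℝ,
      ((|1 - ‖z‖^2| / ‖Complex.exp (θ*Complex.I) - z‖^2 : ℝ) : ℂ) *
          (Complex.exp (θ*Complex.I))^k
        = ((1 - ‖wpt z‖^2 : ℝ) : ℂ) * Complex.exp (θ*Complex.I) *
            ((Complex.exp (θ*Complex.I) - wpt z) *
              (1 - (starRingEnd ℂ) (wpt z) * Complex.exp (θ*Complex.I)))⁻¹ *
            (Complex.exp (θ*Complex.I))^(k.toNat) := by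
    intro θ
    rw [poisson_pt z hz hz1 θ, ← zpow_natCast (Complex.exp (θ*Complex.I)) k.toNat,
      Int.toNat_of_nonneg hk]
  rw [intervalIntegral.integral_congr (g := fun θ => _) (fun θ _ => heq θ)]
  rw [circle_int (wpt z) hw k.toNat]
  rw [mlim, if_pos hk, ← zpow_natCast (wpt z) k.toNat, Int.toNat_of_nonneg hk]

lemma intB (z : ℂ) (hz : z ≠ 0) (hz1 : ‖z‖ ≠ 1) (k : ℤ) :
    (∫ θ in (0:ℝ)..(2*Real.pi),
        ((|1 - ‖z‖^2| / ‖Complex.exp (θ*Complex.I) - z‖^2 : ℝ) : ℂ) *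
          (Complex.exp (θ*Complex.I))^k)
      = ((2*Real.pi : ℝ) : ℂ) * mlim z k := by
  rcases le_or_gt 0 k with hk | hk
  · exact intB_nonneg z hz hz1 k hk
  · have heq : ∀ θ : ℝ,
        ((|1 - ‖z‖^2| / ‖Complex.exp (θ*Complex.I) - z‖^2 : ℝ) : ℂ) *
            (Complex.exp (θ*Complex.I))^k
          = (starRingEnd ℂ)
              (((|1 - ‖z‖^2| / ‖Complex.exp (θ*Complex.I) - z‖^2 : ℝ) : ℂ) *
                (Complex.exp (θ*Complex.I))^(-k)) := by
      intro θ
      set u : ℂ := Complex.exp (θ*Complex.I) with hu_def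
      have hu : ‖u‖ = 1 := Complex.norm_exp_ofReal_mul_I θ
      have hucu : (starRingEnd ℂ) u * u = 1 := by
        rw [← Complex.normSq_eq_conj_mul_self, ← Complex.sq_norm, hu]; norm_num
      have huc : (starRingEnd ℂ) u = u⁻¹ := eq_inv_of_mul_eq_one_left hucu
      rw [map_mul, Complex.conj_ofReal, map_zpow₀, huc, inv_zpow, ← zpow_neg, neg_neg]
    rw [intervalIntegral.integral_congr (g := fun θ => _) (fun θ _ => heq θ)]
    rw [intervalIntegral_conj, intB_nonneg z hz hz1 (-k) (by omega)]
    rw [map_mul, Complex.conj_ofReal]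
    congr 1
    rw [mlim, mlim, if_pos (by omega : (0:ℤ) ≤ -k), if_neg (by omega : ¬ (0:ℤ) ≤ k),
      map_zpow₀]



/-- Formula (29) of Section VIII of Connes' paper: for the bilateral shift `V` and a
finitely supported `f`, `⟨V(f)η_N, η_N⟩ → ∫ P_z(u) f̂(u) du` (Poisson kernel of `z`
against the unit circle) as `N → ∞`. -/
theorem shift_matrix_coefficient_tendsto_poisson
    (z : ℂ) (hz : z ≠ 0) (hz1 : ‖z‖ ≠ 1)
    (f : ℤ → ℂ) (hf : (Function.support f).Finite) :
    Tendsto (fun N : ℕ =>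
        ∑' n : ℤ, (∑' k : ℤ, f k * etaVec z N (n - k)) * (starRingEnd ℂ) (etaVec z N n))
      atTop
      (𝓝 ((1 / (2 * Real.pi) : ℝ) * ∫ θ in (0 : ℝ)..(2 * Real.pi),
        ((|1 - ‖z‖ ^ 2| / ‖Complex.exp (θ * Complex.I) - z‖ ^ 2 : ℝ) : ℂ) *
          symbolHat f (Complex.exp (θ * Complex.I)))) := by
  classical
  set s : Finset ℤ := hf.toFinset with hs
  have hf0 : ∀ b ∉ s, f b = 0 := by
    intro b hb
    by_contra hfb
    exact hb (hf.mem_toFinset.mpr hfb)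
  -- Step 1: rewrite LHS as finite sum of matrix coefficients
  have key : ∀ N : ℕ,
      (∑' n : ℤ, (∑' k : ℤ, f k * etaVec z N (n - k)) * (starRingEnd ℂ) (etaVec z N n))
        = ∑ k ∈ s, f k * ∑' n : ℤ, etaVec z N (n - k) * (starRingEnd ℂ) (etaVec z N n) := by
    intro N
    have hsummable : ∀ k : ℤ,
        Summable (fun n : ℤ => f k * (etaVec z N (n - k) * (starRingEnd ℂ) (etaVec z N n))) := by
      intro k
      apply summable_of_ne_finset_zero (s := Finset.Icc (-(N:ℤ)) N)
      intro b hb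
      rw [Finset.mem_Icc] at hb
      have hnb : ¬ |b| ≤ (N:ℤ) := by rw [abs_le]; omega
      simp [etaVec, hnb]
    have step1 : (∑' n : ℤ, (∑' k : ℤ, f k * etaVec z N (n - k)) * (starRingEnd ℂ) (etaVec z N n))
        = ∑' n : ℤ, ∑ k ∈ s, f k * (etaVec z N (n - k) * (starRingEnd ℂ) (etaVec z N n)) := by
      apply tsum_congr
      intro n
      rw [tsum_eq_sum (s := s) (fun b hb => by rw [hf0 b hb, zero_mul]), Finset.sum_mul]
      exact Finset.sum_congr rfl fun k _ => mul_assoc _ _ _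
    rw [step1, Summable.tsum_finsetSum (fun k _ => hsummable k)]
    exact Finset.sum_congr rfl fun k _ => tsum_mul_left
  -- Step 2: compute RHS
  have hu_cont : Continuous fun θ : ℝ => Complex.exp (θ * Complex.I) :=
    Complex.continuous_exp.comp (Complex.continuous_ofReal.mul continuous_const)
  have huz_ne : ∀ θ : ℝ, Complex.exp (θ * Complex.I) - z ≠ 0 := by
    intro θ
    rw [sub_ne_zero]
    intro e
    apply hz1
    rw [← e, Complex.norm_exp_ofReal_mul_I]
  have hP_cont : Continuous fun θ : ℝ =>
      ((|1 - ‖z‖ ^ 2| / ‖Complex.exp (θ * Complex.I) - z‖ ^ 2 : ℝ) : ℂ) := by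
    apply Complex.continuous_ofReal.comp
    apply Continuous.div continuous_const
    · exact (continuous_norm.comp (hu_cont.sub continuous_const)).pow 2
    · intro θ
      exact pow_ne_zero 2 (norm_ne_zero_iff.mpr (huz_ne θ))
  have hzpow_cont : ∀ k : ℤ, Continuous fun θ : ℝ => (Complex.exp (θ * Complex.I)) ^ k := by
    intro k
    have : (fun θ : ℝ => (Complex.exp (θ * Complex.I)) ^ k)
        = fun θ : ℝ => Complex.exp ((k : ℂ) * (θ * Complex.I)) := by
      funext θ
      rw [Complex.exp_int_mul]
    rw [this]
    exact Complex.continuous_exp.comp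
      (continuous_const.mul (Complex.continuous_ofReal.mul continuous_const))
  have hsymb : ∀ θ : ℝ, symbolHat f (Complex.exp (θ * Complex.I))
      = ∑ k ∈ s, f k * (Complex.exp (θ * Complex.I)) ^ k := by
    intro θ
    exact tsum_eq_sum (fun b hb => by rw [hf0 b hb, zero_mul])
  have hRHS : (∫ θ in (0 : ℝ)..(2 * Real.pi),
        ((|1 - ‖z‖ ^ 2| / ‖Complex.exp (θ * Complex.I) - z‖ ^ 2 : ℝ) : ℂ) *
          symbolHat f (Complex.exp (θ * Complex.I)))
      = ∑ k ∈ s, f k * (((2*Real.pi : ℝ) : ℂ) * mlim z k) := by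
    have e1 : (∫ θ in (0 : ℝ)..(2 * Real.pi),
          ((|1 - ‖z‖ ^ 2| / ‖Complex.exp (θ * Complex.I) - z‖ ^ 2 : ℝ) : ℂ) *
            symbolHat f (Complex.exp (θ * Complex.I)))
        = ∑ k ∈ s, ∫ θ in (0 : ℝ)..(2 * Real.pi),
            f k * (((|1 - ‖z‖ ^ 2| /
                ‖Complex.exp (θ * Complex.I) - z‖ ^ 2 : ℝ) : ℂ) *
              (Complex.exp (θ * Complex.I)) ^ k) := by
      rw [← intervalIntegral.integral_finset_sum]
      · apply intervalIntegral.integral_congr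
        intro θ _
        beta_reduce
        rw [hsymb θ, Finset.mul_sum]
        exact Finset.sum_congr rfl fun k _ => by ring
      · intro k _
        exact (continuous_const.mul (hP_cont.mul (hzpow_cont k))).intervalIntegrable _ _
    rw [e1]
    apply Finset.sum_congr rfl
    intro k _
    rw [intervalIntegral.integral_const_mul, intB z hz hz1 k]
  rw [hRHS]
  -- Step 3: limits
  have htend : Tendsto (fun N : ℕ =>
      ∑ k ∈ s, f k * ∑' n : ℤ, etaVec z N (n - k) * (starRingEnd ℂ) (etaVec z N n))
      atTop (𝓝 (∑ k ∈ s, f k * mlim z k)) := by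
    apply tendsto_finset_sum
    intro k _
    exact Tendsto.const_mul (f k) (lemA z hz hz1 k)
  have hfinal : ((1 / (2 * Real.pi) : ℝ) : ℂ) * ∑ k ∈ s, f k * (((2*Real.pi : ℝ) : ℂ) * mlim z k)
      = ∑ k ∈ s, f k * mlim z k := by
    rw [Finset.mul_sum]
    apply Finset.sum_congr rfl
    intro k _
    have hone : ((1 / (2*Real.pi) : ℝ) : ℂ) * ((2*Real.pi : ℝ) : ℂ) = 1 := by
      rw [← Complex.ofReal_mul,
        one_div_mul_cancel (ne_of_gt (by positivity : (0:ℝ) < 2*Real.pi)),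
        Complex.ofReal_one]
    linear_combination (f k * mlim z k) * hone
  rw [hfinal]
  apply htend.congr
  intro N
  exact (key N).symm
end

section
/- Let G be a locally compact Hausdorff abelian group and |·|: G → ℝ_{>0} a continuous proper group homomorphism whose range is a cocompact subgroup of ℝ_{>0}. Then for every Haar measure μ on G there exists a constant c > 0 such that μ({g ∈ G : 1 ≤ |g| ≤ Λ}) / log Λ → c as Λ → ∞; consequently there is exactly one Haar measure μ* on G with μ*({g : 1 ≤ |g| ≤ Λ}) ∼ log Λ as Λ → ∞. -/
open MeasureTheory Filter Topology
open scoped NNReal ENNReal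

private lemma floor_ratio_tendsto {b v : ℝ} (hb : 0 < b) (hv : 0 ≤ v) :
    Tendsto (fun T : ℝ => ((⌊T / b⌋.toNat + 1 : ℕ) : ℝ) * v / T) atTop (𝓝 (v / b)) := by
  have hlim : Tendsto (fun T : ℝ => v / b + v / T) atTop (𝓝 (v / b)) := by
    have h0 : Tendsto (fun T : ℝ => v / T) atTop (𝓝 0) :=
      Tendsto.div_atTop tendsto_const_nhds tendsto_id
    simpa using tendsto_const_nhds.add h0
  have hcast : ∀ T : ℝ, 0 ≤ T / b → ((⌊T / b⌋.toNat + 1 : ℕ) : ℝ) = (⌊T / b⌋ : ℝ) + 1 := by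
    intro T hTb
    have h0 : (0:ℤ) ≤ ⌊T/b⌋ := Int.floor_nonneg.2 hTb
    calc ((⌊T / b⌋.toNat + 1 : ℕ) : ℝ) = ((⌊T/b⌋.toNat : ℤ) : ℝ) + 1 := by push_cast; ring
    _ = (⌊T/b⌋:ℝ) + 1 := by rw [Int.toNat_of_nonneg h0]
  refine tendsto_of_tendsto_of_tendsto_of_le_of_le' tendsto_const_nhds hlim ?_ ?_
  · filter_upwards [eventually_gt_atTop 0] with T hT
    have hTb : (0:ℝ) ≤ T / b := by positivity
    have h1 : T / b < ((⌊T / b⌋.toNat + 1 : ℕ) : ℝ) := by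
      rw [hcast T hTb]; exact Int.lt_floor_add_one _
    have h2 : T < ((⌊T / b⌋.toNat + 1 : ℕ) : ℝ) * b := (div_lt_iff₀ hb).1 h1
    rw [div_le_div_iff₀ hb hT]
    nlinarith [mul_le_mul_of_nonneg_left h2.le hv]
  · filter_upwards [eventually_gt_atTop 0] with T hT
    have hTb : (0:ℝ) ≤ T / b := by positivity
    have h1 : ((⌊T / b⌋.toNat + 1 : ℕ) : ℝ) ≤ T / b + 1 := by
      rw [hcast T hTb]; linarith [Int.floor_le (T / b)]
    have h2 : ((⌊T / b⌋.toNat + 1 : ℕ) : ℝ) * b ≤ T + b := by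
      calc ((⌊T / b⌋.toNat + 1 : ℕ) : ℝ) * b ≤ (T / b + 1) * b :=
        mul_le_mul_of_nonneg_right h1 hb.le
      _ = T + b := by field_simp
    rw [div_add_div _ _ hb.ne' hT.ne', div_le_div_iff₀ hT (by positivity)]
    nlinarith [mul_le_mul_of_nonneg_right h2 (mul_nonneg hv hT.le)]

/-- Normalization of the Haar measure on a modulated group (Appendix II of Connes' paper):
if `G` is a locally compact abelian group with a continuous proper module homomorphism
`m : G → ℝ_{>0}` with cocompact range, then for every Haar measure `μ` on `G` the ratio
`μ{1 ≤ |g| ≤ Λ}/log Λ` converges to a positive constant as `Λ → ∞`, and there is a unique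
Haar measure normalized so that this constant is `1`. -/
theorem haar_normalization_modulated_group
    (G : Type*) [CommGroup G] [TopologicalSpace G] [IsTopologicalGroup G]
    [LocallyCompactSpace G] [T2Space G] [MeasurableSpace G] [BorelSpace G]
    (m : G → ℝ) (hmpos : ∀ g, 0 < m g) (hmul : ∀ g h : G, m (g * h) = m g * m h)
    (hcont : Continuous m)
    -- properness of `m` as a map to `ℝ_{>0}`:
    (hproper : ∀ K : Set ℝ, IsCompact K → K ⊆ Set.Ioi (0 : ℝ) → IsCompact (m ⁻¹' K))
    -- the range of `m` is cocompact in `ℝ_{>0}`: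
    (hcocompact : ∃ K : Set ℝ, IsCompact K ∧ K ⊆ Set.Ioi (0 : ℝ) ∧
      ∀ x : ℝ, 0 < x → ∃ g : G, ∃ k ∈ K, x = m g * k) :
    (∀ μ : Measure G, μ.IsHaarMeasure →
      ∃ c : ℝ, 0 < c ∧
        Tendsto (fun Λ : ℝ => (μ {g : G | 1 ≤ m g ∧ m g ≤ Λ}).toReal / Real.log Λ)
          atTop (𝓝 c)) ∧
    (∃! μs : Measure G, μs.IsHaarMeasure ∧
      Tendsto (fun Λ : ℝ => (μs {g : G | 1 ≤ m g ∧ m g ≤ Λ}).toReal / Real.log Λ)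
        atTop (𝓝 1)) := by
  classical
  -- basic multiplicative facts
  have hm1 : m 1 = 1 := by
    have h := hmul 1 1
    rw [mul_one] at h
    have := (hmpos 1).ne'
    nlinarith [hmpos 1]
  -- the additive version of the module
  set φ : G → ℝ := fun g => Real.log (m g) with hφdef
  have hφcont : Continuous φ := by
    rw [continuous_iff_continuousAt]
    exact fun g => (Real.continuousAt_log (hmpos g).ne').comp hcont.continuousAt
  have hφmeas : Measurable φ := hφcont.measurable
  have hφadd : ∀ g h : G, φ (g * h) = φ g + φ h := fun g h => by
    simp only [hφdef, hmul g h, Real.log_mul (hmpos g).ne' (hmpos h).ne']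
  have hφone : φ 1 = 0 := by simp [hφdef, hm1]
  -- properness of φ
  have hφproperIcc : ∀ a b : ℝ, IsCompact (φ ⁻¹' Set.Icc a b) := by
    intro a b
    have hset : φ ⁻¹' Set.Icc a b = m ⁻¹' Set.Icc (Real.exp a) (Real.exp b) := by
      ext g
      simp only [Set.mem_preimage, Set.mem_Icc, hφdef]
      rw [Real.le_log_iff_exp_le (hmpos g), Real.log_le_iff_le_exp (hmpos g)]
    rw [hset]
    exact hproper _ isCompact_Icc (fun x hx => lt_of_lt_of_le (Real.exp_pos a) hx.1)
  -- the range of φ as an additive subgroup of ℝ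
  have hφneg : ∀ g : G, φ g⁻¹ = -φ g := by
    intro g
    have h := hφadd g g⁻¹
    rw [mul_inv_cancel, hφone] at h
    linarith
  let Γ : AddSubgroup ℝ :=
    { carrier := Set.range φ
      zero_mem' := ⟨1, hφone⟩
      add_mem' := by
        rintro x y ⟨g, rfl⟩ ⟨h, rfl⟩
        exact ⟨g * h, hφadd g h⟩
      neg_mem' := by
        rintro x ⟨g, rfl⟩
        exact ⟨g⁻¹, hφneg g⟩ }
  have hΓcar : (Γ : Set ℝ) = Set.range φ := rfl
  -- the range of φ is closed
  have hΓclosed : IsClosed (Set.range φ) := by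
    refine isClosed_of_closure_subset fun y hy => ?_
    have hC : IsCompact (φ ⁻¹' Set.Icc (y - 1) (y + 1)) := hφproperIcc _ _
    have himg : IsClosed (φ '' (φ ⁻¹' Set.Icc (y - 1) (y + 1))) :=
      (hC.image hφcont).isClosed
    have hmem : y ∈ closure (φ '' (φ ⁻¹' Set.Icc (y - 1) (y + 1))) := by
      rw [mem_closure_iff] at hy ⊢
      intro o ho hyo
      obtain ⟨x, ⟨hxo, hxI⟩, g, hgx⟩ :=
        hy (o ∩ Set.Ioo (y - 1) (y + 1)) (ho.inter isOpen_Ioo)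
          ⟨hyo, by constructor <;> linarith⟩
      exact ⟨x, hxo, g, by simp only [Set.mem_preimage, hgx]; exact ⟨hxI.1.le, hxI.2.le⟩, hgx⟩
    obtain ⟨g, _, hg⟩ := himg.closure_eq ▸ hmem
    exact ⟨g, hg⟩
  -- cocompactness of the range of φ
  have hR : ∃ R : ℝ, ∀ y : ℝ, ∃ x ∈ Set.range φ, |y - x| ≤ R := by
    obtain ⟨K, hKc, hKpos, hKcov⟩ := hcocompact
    have hKne : K.Nonempty := by
      obtain ⟨g, k, hk, -⟩ := hKcov 1 one_pos
      exact ⟨k, hk⟩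
    have hinf : sInf K ∈ K := hKc.sInf_mem hKne
    have hsup : sSup K ∈ K := hKc.sSup_mem hKne
    have hinfpos : 0 < sInf K := hKpos hinf
    have hsuppos : 0 < sSup K := hKpos hsup
    refine ⟨max |Real.log (sInf K)| |Real.log (sSup K)|, fun y => ?_⟩
    obtain ⟨g, k, hk, hxk⟩ := hKcov (Real.exp y) (Real.exp_pos y)
    have hkpos : 0 < k := hKpos hk
    have hy : y = φ g + Real.log k := by
      have := congrArg Real.log hxk
      rwa [Real.log_exp, Real.log_mul (hmpos g).ne' hkpos.ne'] at this
    refine ⟨φ g, ⟨g, rfl⟩, ?_⟩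
    have h1 : Real.log k ≤ Real.log (sSup K) :=
      Real.log_le_log hkpos (le_csSup hKc.bddAbove hk)
    have h2 : Real.log (sInf K) ≤ Real.log k :=
      Real.log_le_log hinfpos (csInf_le hKc.bddBelow hk)
    rw [hy]
    have : |φ g + Real.log k - φ g| = |Real.log k| := by ring_nf
    rw [this]
    rcases abs_cases (Real.log k) with ⟨he, -⟩ | ⟨he, -⟩ <;> rw [he]
    · exact le_trans (le_trans h1 (le_abs_self _)) (le_max_right _ _)
    · refine le_trans ?_ (le_max_left _ _)
      calc -Real.log k ≤ -Real.log (sInf K) := by linarith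
      _ ≤ |Real.log (sInf K)| := neg_le_abs _
  -- the key set identity
  have hset : ∀ Λ : ℝ, 1 ≤ Λ →
      {g : G | 1 ≤ m g ∧ m g ≤ Λ} = φ ⁻¹' Set.Icc 0 (Real.log Λ) := by
    intro Λ hΛ
    have hΛpos : (0:ℝ) < Λ := lt_of_lt_of_le one_pos hΛ
    ext g
    simp only [Set.mem_setOf_eq, Set.mem_preimage, Set.mem_Icc, hφdef]
    constructor
    · rintro ⟨h1, h2⟩
      exact ⟨Real.log_nonneg h1, (Real.log_le_log_iff (hmpos g) hΛpos).2 h2⟩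
    · rintro ⟨h1, h2⟩
      exact ⟨(Real.log_nonneg_iff (hmpos g)).1 h1, (Real.log_le_log_iff (hmpos g) hΛpos).1 h2⟩
  -- any two Haar measures on G are proportional (G is σ-compact thanks to properness)
  have scalar : ∀ (μ₁ μ₂ : Measure G), μ₁.IsHaarMeasure → μ₂.IsHaarMeasure →
      ∃ k : ℝ≥0, 0 < k ∧ μ₂ = k • μ₁ := by
    intro μ₁ μ₂ h₁ h₂
    haveI := h₁; haveI := h₂
    refine ⟨Measure.haarScalarFactor μ₂ μ₁,
      Measure.haarScalarFactor_pos_of_isHaarMeasure μ₂ μ₁, ?_⟩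
    set B : ℕ → Set G := fun n => m ⁻¹' Set.Icc ((n:ℝ)+1)⁻¹ ((n:ℝ)+1) with hB
    have hBcomp : ∀ n, IsCompact (B n) := by
      intro n
      refine hproper _ isCompact_Icc (fun x hx => lt_of_lt_of_le ?_ hx.1)
      positivity
    have hBmono : Monotone B := by
      intro i j hij
      apply Set.preimage_mono
      have hij' : (i:ℝ) ≤ j := Nat.cast_le.2 hij
      apply Set.Icc_subset_Icc
      · apply inv_anti₀ (by positivity)
        linarith
      · linarith
    have hBunion : ⋃ n, B n = Set.univ := by
      ext g
      simp only [Set.mem_iUnion, Set.mem_univ, iff_true, Set.mem_preimage, Set.mem_Icc, hB]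
      refine ⟨⌈max (m g) (m g)⁻¹⌉₊, ?_, ?_⟩
      · have h1 : (m g)⁻¹ ≤ (⌈max (m g) (m g)⁻¹⌉₊ : ℝ) + 1 :=
          le_trans (le_trans (le_max_right _ _) (Nat.le_ceil _)) (by linarith)
        exact inv_le_of_inv_le₀ (hmpos g) h1
      · exact le_trans (le_trans (le_max_left _ _) (Nat.le_ceil _)) (by linarith)
    refine Measure.ext fun s _ => ?_
    have hdir : Directed (· ⊆ ·) (fun n => s ∩ B n) :=
      Monotone.directed_le (fun i j hij => Set.inter_subset_inter_right _ (hBmono hij))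
    have hcover : ∀ (μ' : Measure G), μ' s = ⨆ n, μ' (s ∩ B n) := by
      intro μ'
      conv_lhs => rw [← Set.inter_univ s, ← hBunion, Set.inter_iUnion]
      exact Directed.measure_iUnion hdir
    calc μ₂ s = ⨆ n, μ₂ (s ∩ B n) := hcover μ₂
    _ = ⨆ n, (Measure.haarScalarFactor μ₂ μ₁ : ℝ≥0∞) * μ₁ (s ∩ B n) := by
        refine iSup_congr fun n => ?_
        have hcc : IsCompact (closure (s ∩ B n)) :=
          (hBcomp n).closure_of_subset Set.inter_subset_right
        have := Measure.measure_isMulInvariant_eq_smul_of_isCompact_closure μ₂ μ₁ hcc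
        simpa [ENNReal.smul_def, smul_eq_mul] using this
    _ = (Measure.haarScalarFactor μ₂ μ₁ : ℝ≥0∞) * μ₁ s := by
        rw [← ENNReal.mul_iSup, ← hcover μ₁]
    _ = (Measure.haarScalarFactor μ₂ μ₁ • μ₁) s := by
        rw [Measure.smul_apply, ENNReal.smul_def, smul_eq_mul]
  -- reduction: it is enough to establish the first statement
  have assemble : (∀ μ : Measure G, μ.IsHaarMeasure →
      ∃ c : ℝ, 0 < c ∧
        Tendsto (fun Λ : ℝ => (μ {g : G | 1 ≤ m g ∧ m g ≤ Λ}).toReal / Real.log Λ)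
          atTop (𝓝 c)) →
      ((∀ μ : Measure G, μ.IsHaarMeasure →
      ∃ c : ℝ, 0 < c ∧
        Tendsto (fun Λ : ℝ => (μ {g : G | 1 ≤ m g ∧ m g ≤ Λ}).toReal / Real.log Λ)
          atTop (𝓝 c)) ∧
      (∃! μs : Measure G, μs.IsHaarMeasure ∧
        Tendsto (fun Λ : ℝ => (μs {g : G | 1 ≤ m g ∧ m g ≤ Λ}).toReal / Real.log Λ)
          atTop (𝓝 1))) := by
    intro key
    refine ⟨key, ?_⟩
    obtain ⟨c₀, hc₀, hlim₀⟩ := key MeasureTheory.Measure.haar inferInstance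
    set μs : Measure G := ((c₀.toNNReal⁻¹ : ℝ≥0) : ℝ≥0∞) • MeasureTheory.Measure.haar with hμsdef
    have hcoe : (((c₀.toNNReal⁻¹ : ℝ≥0) : ℝ≥0∞)).toReal = c₀⁻¹ := by
      rw [ENNReal.coe_toReal, NNReal.coe_inv, Real.coe_toNNReal _ hc₀.le]
    haveI hμs : μs.IsHaarMeasure := by
      have h1 : (((c₀.toNNReal⁻¹ : ℝ≥0) : ℝ≥0∞)) ≠ 0 := by
        simp only [ne_eq, ENNReal.coe_eq_zero, inv_eq_zero]
        exact (Real.toNNReal_pos.2 hc₀).ne'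
      have h2 : (((c₀.toNNReal⁻¹ : ℝ≥0) : ℝ≥0∞)) ≠ ⊤ := ENNReal.coe_ne_top
      exact hμsdef ▸ Measure.IsHaarMeasure.smul MeasureTheory.Measure.haar h1 h2
    have hratio : ∀ Λ : ℝ, (μs {g : G | 1 ≤ m g ∧ m g ≤ Λ}).toReal
        = c₀⁻¹ * (MeasureTheory.Measure.haar {g : G | 1 ≤ m g ∧ m g ≤ Λ}).toReal := by
      intro Λ
      rw [hμsdef, Measure.smul_apply, smul_eq_mul, ENNReal.toReal_mul, hcoe]
    have hlims : Tendsto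
        (fun Λ : ℝ => (μs {g : G | 1 ≤ m g ∧ m g ≤ Λ}).toReal / Real.log Λ) atTop (𝓝 1) := by
      have h := hlim₀.const_mul c₀⁻¹
      rw [inv_mul_cancel₀ hc₀.ne'] at h
      refine h.congr fun Λ => ?_
      rw [hratio, mul_div_assoc]
    refine ⟨μs, ⟨hμs, hlims⟩, ?_⟩
    rintro μ' ⟨h'H, h'lim⟩
    obtain ⟨k, hk, hkeq⟩ := scalar μs μ' hμs h'H
    have hfun : ∀ Λ : ℝ, (μ' {g : G | 1 ≤ m g ∧ m g ≤ Λ}).toReal / Real.log Λ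
        = (k : ℝ) * ((μs {g : G | 1 ≤ m g ∧ m g ≤ Λ}).toReal / Real.log Λ) := by
      intro Λ
      rw [hkeq, Measure.smul_apply, ENNReal.smul_def, smul_eq_mul, ENNReal.toReal_mul,
        ENNReal.coe_toReal, mul_div_assoc]
    have h2 : Tendsto (fun Λ : ℝ => (μ' {g : G | 1 ≤ m g ∧ m g ≤ Λ}).toReal / Real.log Λ)
        atTop (𝓝 ((k:ℝ) * 1)) :=
      Tendsto.congr (fun Λ => (hfun Λ).symm) (hlims.const_mul (k:ℝ))
    have hk1 : (k : ℝ) * 1 = 1 := tendsto_nhds_unique h2 h'lim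
    have hk1' : k = 1 := by
      have : (k:ℝ) = 1 := by linarith
      exact_mod_cast this
    rw [hkeq, hk1', one_smul]
  apply assemble
  -- dichotomy for the range
  rcases AddSubgroup.dense_or_cyclic Γ with hdense | ⟨a, ha⟩
  · -- dense range: φ is surjective, the pushforward is a Haar measure on ℝ
    intro μ hμ
    haveI := hμ
    have hsurj : Function.Surjective φ := by
      have hdense' : Dense (Set.range φ) := by rwa [hΓcar] at hdense
      have huniv : Set.range φ = Set.univ :=
        (hΓclosed.closure_eq).symm.trans hdense'.closure_eq
      exact Set.range_eq_univ.1 huniv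
    set ν : Measure ℝ := Measure.map φ μ with hν
    haveI hν_inv : ν.IsAddLeftInvariant := by
      refine ⟨fun t => ?_⟩
      obtain ⟨g₀, hg₀⟩ := hsurj t
      have e1 : Measure.map (t + ·) (Measure.map φ μ) = Measure.map ((t + ·) ∘ φ) μ :=
        Measure.map_map (measurable_const_add t) hφmeas
      have e2 : (t + ·) ∘ φ = φ ∘ (· * g₀) := by
        funext x
        simp only [Function.comp_apply, hφadd, hg₀]
        ring
      have e3 : Measure.map (φ ∘ (· * g₀)) μ = Measure.map φ (Measure.map (· * g₀) μ) :=
        (Measure.map_map hφmeas (measurable_mul_const g₀)).symm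
      simp only [hν]
      rw [e1, e2, e3, map_mul_right_eq_self]
    haveI hν_fc : IsFiniteMeasureOnCompacts ν := by
      refine ⟨fun K hK => ?_⟩
      obtain ⟨r, hr⟩ := hK.isBounded.subset_closedBall 0
      calc ν K ≤ ν (Set.Icc (0 - r) (0 + r)) := by
            refine measure_mono (hr.trans ?_)
            rw [Real.closedBall_eq_Icc]
      _ = μ (φ ⁻¹' Set.Icc (0 - r) (0 + r)) := Measure.map_apply hφmeas measurableSet_Icc
      _ < ⊤ := (hφproperIcc _ _).measure_lt_top
    haveI hν_pos : ν.IsOpenPosMeasure := by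
      refine ⟨fun U hU hne => ?_⟩
      rw [hν, Measure.map_apply hφmeas hU.measurableSet]
      obtain ⟨x, hx⟩ := hne
      obtain ⟨g, rfl⟩ := hsurj x
      exact (hU.preimage hφcont).measure_ne_zero μ ⟨g, hx⟩
    haveI hνHaar : ν.IsAddHaarMeasure := ⟨⟩
    have huniq : ν = Measure.addHaarScalarFactor ν volume • volume :=
      Measure.isAddLeftInvariant_eq_smul ν volume
    have hcpos : 0 < Measure.addHaarScalarFactor ν (volume : Measure ℝ) :=
      Measure.addHaarScalarFactor_pos_of_isAddHaarMeasure ν volume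
    refine ⟨(Measure.addHaarScalarFactor ν (volume : Measure ℝ) : ℝ), by exact_mod_cast hcpos, ?_⟩
    have hval : ∀ Λ : ℝ, 1 < Λ →
        (μ {g : G | 1 ≤ m g ∧ m g ≤ Λ}).toReal / Real.log Λ
          = (Measure.addHaarScalarFactor ν (volume : Measure ℝ) : ℝ) := by
      intro Λ hΛ
      have hlog : 0 < Real.log Λ := Real.log_pos hΛ
      rw [hset Λ hΛ.le]
      have hmap : μ (φ ⁻¹' Set.Icc 0 (Real.log Λ)) = ν (Set.Icc 0 (Real.log Λ)) :=
        (Measure.map_apply hφmeas measurableSet_Icc).symm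
      rw [hmap]
      nth_rewrite 1 [huniq]
      rw [Measure.smul_apply, ENNReal.smul_def, smul_eq_mul, Real.volume_Icc,
        ENNReal.toReal_mul, ENNReal.coe_toReal, sub_zero, ENNReal.toReal_ofReal hlog.le]
      field_simp
    refine Tendsto.congr' ?_ tendsto_const_nhds
    filter_upwards [eventually_gt_atTop 1] with Λ hΛ
    exact (hval Λ hΛ).symm
  · -- cyclic range
    have hrangeIff : ∀ x : ℝ, x ∈ Set.range φ ↔ ∃ n : ℤ, n • a = x := by
      intro x
      have hx : x ∈ Set.range φ ↔ x ∈ Γ := Iff.rfl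
      rw [hx, ha, AddSubgroup.mem_closure_singleton]
    have hane : a ≠ 0 := by
      rintro rfl
      obtain ⟨R, hRy⟩ := hR
      obtain ⟨x, hx, hxy⟩ := hRy (|R| + 1)
      obtain ⟨n, hn⟩ := (hrangeIff x).1 hx
      rw [smul_zero] at hn
      rw [← hn, sub_zero, abs_of_nonneg (by positivity)] at hxy
      linarith [le_abs_self R]
    set b : ℝ := |a| with hbdef
    have hb : 0 < b := abs_pos.2 hane
    have hrange' : ∀ x : ℝ, x ∈ Set.range φ ↔ ∃ n : ℤ, x = (n:ℝ) * b := by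
      intro x
      rw [hrangeIff]
      constructor
      · rintro ⟨n, rfl⟩
        rcases abs_cases a with ⟨h1, _⟩ | ⟨h1, _⟩
        · exact ⟨n, by rw [hbdef, h1, zsmul_eq_mul]⟩
        · refine ⟨-n, ?_⟩
          rw [hbdef, h1, zsmul_eq_mul]
          push_cast
          ring
      · rintro ⟨n, rfl⟩
        rcases abs_cases a with ⟨h1, _⟩ | ⟨h1, _⟩
        · exact ⟨n, by rw [hbdef, h1, zsmul_eq_mul]⟩
        · refine ⟨-n, ?_⟩
          rw [hbdef, h1, zsmul_eq_mul]
          push_cast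
          ring
    intro μ hμ
    haveI := hμ
    have hinv : ∀ (g₀ : G) (A : Set G), μ ((fun x => x * g₀) ⁻¹' A) = μ A :=
      fun g₀ A => measure_preimage_mul_right μ g₀ A
    have hsingle : ∀ n : ℤ, μ (φ ⁻¹' {(n:ℝ) * b}) = μ (φ ⁻¹' {0}) := by
      intro n
      obtain ⟨g₀, hg₀⟩ := (hrange' ((n:ℝ) * b)).2 ⟨n, rfl⟩
      have hpre : (fun x => x * g₀) ⁻¹' (φ ⁻¹' {(n:ℝ) * b}) = φ ⁻¹' {0} := by
        ext x
        simp only [Set.mem_preimage, Set.mem_singleton_iff, hφadd, hg₀]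
        constructor <;> intro h <;> linarith
      calc μ (φ ⁻¹' {(n:ℝ) * b})
          = μ ((fun x => x * g₀) ⁻¹' (φ ⁻¹' {(n:ℝ) * b})) := (hinv g₀ _).symm
      _ = μ (φ ⁻¹' {0}) := by rw [hpre]
    have hν0ne : μ (φ ⁻¹' {0}) ≠ ⊤ := by
      refine ne_top_of_le_ne_top (hφproperIcc (-1) 1).measure_lt_top.ne (measure_mono ?_)
      apply Set.preimage_mono
      intro x hx
      simp only [Set.mem_singleton_iff] at hx
      rw [hx]
      constructor <;> norm_num
    have hν0pos : 0 < μ (φ ⁻¹' {0}) := by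
      have hsub : φ ⁻¹' Set.Ioo (-b) b = φ ⁻¹' {0} := by
        ext g
        simp only [Set.mem_preimage, Set.mem_Ioo, Set.mem_singleton_iff]
        constructor
        · rintro ⟨h1, h2⟩
          obtain ⟨n, hn⟩ := (hrange' (φ g)).1 ⟨g, rfl⟩
          rw [hn] at h1 h2 ⊢
          have hn0 : n = 0 := by
            by_contra hn0
            have hge : (1:ℝ) ≤ |(n:ℝ)| := by
              have := Int.one_le_abs hn0
              exact_mod_cast this
            have habs : |(n:ℝ) * b| < b := abs_lt.2 ⟨h1, h2⟩
            rw [abs_mul, abs_abs] at habs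
            nlinarith
          rw [hn0]
          norm_num
        · intro h
          rw [h]
          constructor <;> linarith
      rw [← hsub]
      have hopen : IsOpen (φ ⁻¹' Set.Ioo (-b) b) := isOpen_Ioo.preimage hφcont
      have hne : (φ ⁻¹' Set.Ioo (-b) b).Nonempty := by
        refine ⟨1, ?_⟩
        simp only [Set.mem_preimage, Set.mem_Ioo, hφone]
        exact ⟨by linarith, hb⟩
      exact hopen.measure_pos μ hne
    have hcount : ∀ T : ℝ, 0 ≤ T →
        μ (φ ⁻¹' Set.Icc 0 T)
          = ((⌊T / b⌋.toNat + 1 : ℕ) : ℝ≥0∞) * μ (φ ⁻¹' {0}) := by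
      intro T hT
      have hN0 : (0:ℤ) ≤ ⌊T / b⌋ := Int.floor_nonneg.2 (by positivity)
      have hdecomp : φ ⁻¹' Set.Icc 0 T
          = ⋃ n ∈ Finset.Icc (0:ℤ) ⌊T / b⌋, φ ⁻¹' {(n:ℝ) * b} := by
        ext g
        simp only [Set.mem_preimage, Set.mem_Icc, Set.mem_iUnion, Finset.mem_Icc,
          Set.mem_singleton_iff, exists_prop]
        constructor
        · rintro ⟨h0, hT'⟩
          obtain ⟨n, hn⟩ := (hrange' (φ g)).1 ⟨g, rfl⟩
          rw [hn] at h0 hT' ⊢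
          have hn0 : 0 ≤ n := by
            by_contra hcon
            push_neg at hcon
            have hlt : (n:ℝ) < 0 := by exact_mod_cast hcon
            nlinarith
          refine ⟨n, ⟨hn0, ?_⟩, rfl⟩
          rw [Int.le_floor, le_div_iff₀ hb]
          linarith
        · rintro ⟨n, ⟨h0, hN⟩, hg⟩
          rw [hg]
          have hn0 : (0:ℝ) ≤ (n:ℝ) := by exact_mod_cast h0
          have hnd : (n:ℝ) ≤ T / b := by exact_mod_cast Int.le_floor.1 hN
          exact ⟨mul_nonneg hn0 hb.le, (le_div_iff₀ hb).1 hnd⟩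
      rw [hdecomp, measure_biUnion_finset ?_ ?_]
      · rw [Finset.sum_congr rfl (fun n _ => hsingle n), Finset.sum_const, Int.card_Icc]
        have hcard : (⌊T / b⌋ + 1 - 0).toNat = ⌊T / b⌋.toNat + 1 := by omega
        rw [hcard, nsmul_eq_mul]
      · intro i _ j _ hij
        refine Disjoint.preimage φ (Set.disjoint_singleton.2 ?_)
        intro hcon
        exact hij (by exact_mod_cast mul_right_cancel₀ hb.ne' hcon)
      · exact fun n _ => hφmeas (measurableSet_singleton _)
    have hvpos : 0 < (μ (φ ⁻¹' {0})).toReal := ENNReal.toReal_pos hν0pos.ne' hν0ne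
    refine ⟨(μ (φ ⁻¹' {0})).toReal / b, div_pos hvpos hb, ?_⟩
    have hval : ∀ Λ : ℝ, 1 ≤ Λ →
        (μ {g : G | 1 ≤ m g ∧ m g ≤ Λ}).toReal / Real.log Λ
          = ((⌊Real.log Λ / b⌋.toNat + 1 : ℕ) : ℝ) * (μ (φ ⁻¹' {0})).toReal
              / Real.log Λ := by
      intro Λ hΛ
      rw [hset Λ hΛ, hcount _ (Real.log_nonneg hΛ), ENNReal.toReal_mul,
        ENNReal.toReal_natCast]
    have hcomp := (floor_ratio_tendsto hb hvpos.le).comp Real.tendsto_log_atTop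
    refine Tendsto.congr' ?_ hcomp
    filter_upwards [eventually_ge_atTop 1] with Λ hΛ
    simp only [Function.comp_apply]
    exact (hval Λ hΛ).symm
end
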